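/- arXiv:1601.04785 — 3 statements merged into one kernel-verified Lean document; each statement's English description precedes it below -/
import Mathlib

section
/- For every positive integer n, the number r₂(n) of pairs (p,q) ∈ ℤ × ℤ with p² + q² = n equals 4·Σ_{d ∣ n} χ₋₄(d), where χ₋₄ is the nontrivial Dirichlet character mod 4. -/
/-- The nontrivial Dirichlet character mod 4, as a function `ℕ → ℤ`. -/
def chiMinusFour (d : ℕ) : ℤ :=
  if d % 4 = 1 then 1 else if d % 4 = 3 then -1 else 0

lemma chi_mul (a b : ℕ) : chiMinusFour (a * b) = chiMinusFour a * chiMinusFour b := by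
  have h : (a * b) % 4 = (a % 4) * (b % 4) % 4 := Nat.mul_mod a b 4
  unfold chiMinusFour
  rw [h]
  have ha : a % 4 < 4 := Nat.mod_lt _ (by norm_num)
  have hb : b % 4 < 4 := Nat.mod_lt _ (by norm_num)
  interval_cases (a % 4) <;> interval_cases (b % 4) <;> norm_num

/-- χ as an arithmetic function. -/
def chiAF : ArithmeticFunction ℤ := ⟨fun d => chiMinusFour d, by simp [chiMinusFour]⟩

lemma chiAF_mult : chiAF.IsMultiplicative :=
  ⟨by simp [chiAF, chiMinusFour], fun _ => chi_mul _ _⟩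

noncomputable def Fd (n : ℕ) : ℤ := ∑ d ∈ n.divisors, chiMinusFour d

lemma Fd_eq (n : ℕ) : Fd n = (chiAF * (ArithmeticFunction.zeta : ArithmeticFunction ℕ)) n := by
  rw [ArithmeticFunction.coe_mul_zeta_apply]; rfl

lemma Fd_mult : ∀ {m k : ℕ}, Nat.Coprime m k → Fd (m * k) = Fd m * Fd k := by
  intro m k h
  simp only [Fd_eq]
  exact (chiAF_mult.mul ArithmeticFunction.isMultiplicative_zeta.natCast).map_mul_of_coprime h

lemma chi_pow (p i : ℕ) : chiMinusFour (p ^ i) = (chiMinusFour p) ^ i := by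
  induction i with
  | zero => simp [chiMinusFour]
  | succ j ih => rw [pow_succ, chi_mul, ih, pow_succ]

lemma Fd_prime_pow (p : ℕ) (hp : p.Prime) (k : ℕ) :
    Fd (p ^ k) = ∑ i ∈ Finset.range (k + 1), (chiMinusFour p) ^ i := by
  rw [Fd, Nat.sum_divisors_prime_pow hp]
  exact Finset.sum_congr rfl fun i _ => chi_pow p i

lemma Fd_two_pow (k : ℕ) : Fd (2 ^ k) = 1 := by
  rw [Fd_prime_pow 2 Nat.prime_two]
  have h2 : chiMinusFour 2 = 0 := by simp [chiMinusFour]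
  rw [h2]
  induction k with
  | zero => simp
  | succ j ih => rw [Finset.sum_range_succ, ih, zero_pow (by omega)]; ring

lemma Fd_ord (p n : ℕ) (hp : p.Prime) (hn : 0 < n) :
    Fd n = Fd (p ^ n.factorization p) * Fd (n / p ^ n.factorization p) := by
  conv_lhs => rw [← Nat.ordProj_mul_ordCompl_eq_self n p]
  exact Fd_mult ((Nat.coprime_ordCompl hp hn.ne').pow_left _)

lemma Fd_even (n : ℕ) (hn : 0 < n) (h2 : 2 ∣ n) : Fd n = Fd (n / 2) := by
  have e2 : 1 ≤ n.factorization 2 := (Nat.Prime.pow_dvd_iff_le_factorization Nat.prime_two hn.ne').1 (by simpa using h2)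
  have hn2 : 0 < n / 2 := Nat.div_pos (Nat.le_of_dvd hn h2) (by norm_num)
  have key : (n / 2).factorization 2 = n.factorization 2 - 1 := by
    obtain ⟨m, rfl⟩ := h2
    rw [Nat.mul_div_cancel_left _ (by norm_num)]
    have hm : 0 < m := by omega
    rw [Nat.factorization_mul (by norm_num) hm.ne', Nat.Prime.factorization Nat.prime_two]
    simp [Finsupp.single_apply]
  have comp : n / 2 / 2 ^ ((n/2).factorization 2) = n / 2 ^ (n.factorization 2) := by
    rw [key, Nat.div_div_eq_div_mul]
    congr 1
    have h : n.factorization 2 = (n.factorization 2 - 1) + 1 := by omega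
    conv_rhs => rw [h, pow_succ]
    ring
  rw [Fd_ord 2 n Nat.prime_two hn, Fd_ord 2 (n/2) Nat.prime_two hn2, comp,
    Fd_two_pow, Fd_two_pow]

lemma ord_helper (p k n : ℕ) (hp : p.Prime) (hn : 0 < n) (h : p ^ k ∣ n) :
    (n / p ^ k).factorization p = n.factorization p - k ∧
    (n / p ^ k) / p ^ (n.factorization p - k) = n / p ^ n.factorization p := by
  obtain ⟨m, rfl⟩ := h
  have hm : 0 < m := by
    rcases Nat.eq_zero_or_pos m with h0 | h0
    · subst h0; simp at hn
    · exact h0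
  rw [Nat.mul_div_cancel_left _ (pow_pos hp.pos k)]
  have hfac : (p ^ k * m).factorization p = k + m.factorization p := by
    rw [Nat.factorization_mul (pow_ne_zero _ hp.pos.ne') hm.ne',
      Nat.Prime.factorization_pow hp]
    simp [Finsupp.single_apply]
  rw [hfac]
  refine ⟨by omega, ?_⟩
  have hk : k + m.factorization p - k = m.factorization p := by omega
  rw [hk, pow_add, ← Nat.div_div_eq_div_mul, Nat.mul_div_cancel_left _ (pow_pos hp.pos k)]

lemma Fd_div_sq (p n : ℕ) (hp : p.Prime) (hp3 : p % 4 = 3) (hn : 0 < n) (h : p ^ 2 ∣ n) :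
    Fd n = Fd (n / p ^ 2) := by
  have he : 2 ≤ n.factorization p :=
    (Nat.Prime.pow_dvd_iff_le_factorization hp hn.ne').1 h
  have hpos : 0 < n / p ^ 2 := Nat.div_pos (Nat.le_of_dvd hn h) (pow_pos hp.pos 2)
  obtain ⟨h1, h2⟩ := ord_helper p 2 n hp hn h
  rw [Fd_ord p n hp hn, Fd_ord p _ hp hpos, h1, h2]
  congr 1
  rw [Fd_prime_pow p hp, Fd_prime_pow p hp]
  have hchi : chiMinusFour p = -1 := by simp [chiMinusFour, hp3]
  rw [hchi, neg_one_geom_sum, neg_one_geom_sum]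
  have hmod : (n.factorization p + 1) % 2 = (n.factorization p - 2 + 1) % 2 := by omega
  simp [Nat.even_iff, hmod]

lemma Fd_zero_of (p n : ℕ) (hp : p.Prime) (hp3 : p % 4 = 3) (hn : 0 < n)
    (h1 : p ∣ n) (h2 : ¬ p ^ 2 ∣ n) : Fd n = 0 := by
  have he1 : 1 ≤ n.factorization p :=
    (Nat.Prime.pow_dvd_iff_le_factorization hp hn.ne').1 (by simpa using h1)
  have he2 : ¬ 2 ≤ n.factorization p := fun hc =>
    h2 ((Nat.Prime.pow_dvd_iff_le_factorization hp hn.ne').2 hc)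
  have he : n.factorization p = 1 := by omega
  rw [Fd_ord p n hp hn, he, Fd_prime_pow p hp]
  have hchi : chiMinusFour p = -1 := by simp [chiMinusFour, hp3]
  rw [hchi]
  norm_num [Finset.sum_range_succ]

lemma Fd_case1 (p n : ℕ) (hp : p.Prime) (hp1 : p % 4 = 1) (hn : 0 < n) :
    Fd n = ((n.factorization p : ℤ) + 1) * Fd (n / p ^ n.factorization p) := by
  rw [Fd_ord p n hp hn]
  congr 1
  rw [Fd_prime_pow p hp]
  have hchi : chiMinusFour p = 1 := by simp [chiMinusFour, hp1]
  rw [hchi]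
  simp [Finset.sum_const]

open Zsqrtd

def Gs (n : ℕ) : Set GaussianInt := {z | z.norm = (n : ℤ)}

lemma norm_eq' (z : GaussianInt) : z.norm = z.re ^ 2 + z.im ^ 2 := by
  rw [Zsqrtd.norm_def]; ring

lemma ncard_S_eq (n : ℕ) :
    {x : ℤ × ℤ | x.1 ^ 2 + x.2 ^ 2 = (n : ℤ)}.ncard = (Gs n).ncard := by
  have himg : {x : ℤ × ℤ | x.1 ^ 2 + x.2 ^ 2 = (n : ℤ)}
      = (fun z : GaussianInt => (z.re, z.im)) '' Gs n := by
    ext x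
    constructor
    · intro hx
      exact ⟨⟨x.1, x.2⟩, by simpa [Gs, norm_eq'] using hx, rfl⟩
    · rintro ⟨z, hz, rfl⟩
      simpa [Gs, norm_eq'] using hz
  rw [himg, Set.ncard_image_of_injective _ (fun a b h =>
    Zsqrtd.ext (by simpa using congrArg Prod.fst h) (by simpa using congrArg Prod.snd h))]

lemma sol1 (a b : ℤ) (h : a ^ 2 + b ^ 2 = 1) :
    a = 1 ∧ b = 0 ∨ a = -1 ∧ b = 0 ∨ a = 0 ∧ b = 1 ∨ a = 0 ∧ b = -1 := by
  have h1 : a ≤ 1 := by nlinarith [sq_nonneg b]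
  have h2 : -1 ≤ a := by nlinarith [sq_nonneg b]
  have hb1 : b ≤ 1 := by nlinarith [sq_nonneg a]
  have hb2 : -1 ≤ b := by nlinarith [sq_nonneg a]
  interval_cases a <;> interval_cases b <;> omega

lemma Gs_one : (Gs 1).ncard = 4 := by
  have : Gs 1 = ↑({⟨1,0⟩, ⟨-1,0⟩, ⟨0,1⟩, ⟨0,-1⟩} : Finset GaussianInt) := by
    ext z
    simp only [Gs, Set.mem_setOf_eq, Finset.coe_insert, Set.mem_insert_iff,
      Finset.coe_singleton, Set.mem_singleton_iff, norm_eq']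
    constructor
    · intro h
      push_cast at h
      rcases sol1 _ _ h with ⟨h1, h2⟩ | ⟨h1, h2⟩ | ⟨h1, h2⟩ | ⟨h1, h2⟩
      · exact Or.inl (Zsqrtd.ext h1 h2)
      · exact Or.inr (Or.inl (Zsqrtd.ext h1 h2))
      · exact Or.inr (Or.inr (Or.inl (Zsqrtd.ext h1 h2)))
      · exact Or.inr (Or.inr (Or.inr (Zsqrtd.ext h1 h2)))
    · rintro (rfl | rfl | rfl | rfl) <;> norm_num
  rw [this, Set.ncard_coe_finset]
  decide

lemma norm_dvd_norm {a b : GaussianInt} (h : a ∣ b) : a.norm ∣ b.norm := by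
  obtain ⟨c, rfl⟩ := h
  exact ⟨c.norm, (Zsqrtd.norm_mul a c)⟩

lemma Gs_even (m : ℕ) : (Gs (2 * m)).ncard = (Gs m).ncard := by
  rw [← Nat.card_coe_set_eq, ← Nat.card_coe_set_eq]
  have hne : (⟨1, 1⟩ : GaussianInt) ≠ 0 := by
    intro h
    simpa using congrArg Zsqrtd.re h
  have hnorm : (⟨1, 1⟩ : GaussianInt).norm = 2 := by
    simp [Zsqrtd.norm_def]
  refine (Nat.card_eq_of_bijective
    (fun w => (⟨(⟨1, 1⟩ : GaussianInt) * w.1, ?_⟩ : ↥(Gs (2 * m)))) ⟨?_, ?_⟩).symm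
  · have hw := w.2
    simp only [Gs, Set.mem_setOf_eq] at hw ⊢
    rw [Zsqrtd.norm_mul, hnorm, hw]
    push_cast
    ring
  · intro a b h
    have := congrArg Subtype.val h
    exact Subtype.ext (mul_left_cancel₀ hne this)
  · rintro ⟨z, hz⟩
    simp only [Gs, Set.mem_setOf_eq] at hz
    have hz' : z.re ^ 2 + z.im ^ 2 = 2 * (m : ℤ) := by
      rw [← norm_eq', hz]; push_cast; ring
    have heven : Even (z.re + z.im) := by
      have h1 : Even (z.re ^ 2 + z.im ^ 2) := ⟨(m : ℤ), by linarith⟩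
      simpa [Int.even_add, Int.even_pow] using h1
    obtain ⟨k, hk⟩ := heven
    obtain ⟨l, hl⟩ : Even (z.im - z.re) := ⟨k - z.re, by omega⟩
    have hprod : (⟨1, 1⟩ : GaussianInt) * ⟨k, l⟩ = z := by
      refine Zsqrtd.ext ?_ ?_ <;> simp [Zsqrtd.re_mul, Zsqrtd.im_mul] <;> omega
    have hwn : (⟨k, l⟩ : GaussianInt).norm = (m : ℤ) := by
      have h2 := congrArg Zsqrtd.norm hprod
      rw [Zsqrtd.norm_mul, hnorm, hz] at h2
      push_cast at h2
      linarith
    exact ⟨⟨⟨k, l⟩, hwn⟩, Subtype.ext hprod⟩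

lemma dvd_of_dvd_sq_add_sq (p : ℕ) (hp : p.Prime) (hp3 : p % 4 = 3) (a b : ℤ)
    (h : (p : ℤ) ∣ a ^ 2 + b ^ 2) : (p : ℤ) ∣ a ∧ (p : ℤ) ∣ b := by
  haveI : Fact p.Prime := ⟨hp⟩
  have hns : ¬ IsSquare (-1 : ZMod p) := by
    rw [ZMod.exists_sq_eq_neg_one_iff]; simp [hp3]
  have h0 : (a : ZMod p) ^ 2 + (b : ZMod p) ^ 2 = 0 := by
    have := (ZMod.intCast_zmod_eq_zero_iff_dvd _ p).2 h
    push_cast at this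
    exact this
  have ha : (a : ZMod p) = 0 := by
    by_contra hne
    apply hns
    refine ⟨(b : ZMod p) * (a : ZMod p)⁻¹, ?_⟩
    have hainv : (a : ZMod p) * (a : ZMod p)⁻¹ = 1 := ZMod.mul_inv_of_unit _ (Ne.isUnit hne)
    field_simp
    linear_combination -h0
  have hb : (b : ZMod p) = 0 := by
    have : (b : ZMod p) ^ 2 = 0 := by rw [← h0, ha]; ring
    exact pow_eq_zero_iff (by norm_num) |>.1 this
  exact ⟨(ZMod.intCast_zmod_eq_zero_iff_dvd a p).1 ha,
    (ZMod.intCast_zmod_eq_zero_iff_dvd b p).1 hb⟩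

lemma Gs_div_sq (p m : ℕ) (hp : p.Prime) (hp3 : p % 4 = 3) :
    (Gs (p ^ 2 * m)).ncard = (Gs m).ncard := by
  rw [← Nat.card_coe_set_eq, ← Nat.card_coe_set_eq]
  have hne : ((p : ℤ) : GaussianInt) ≠ 0 := by
    simp [Int.cast_injective.eq_iff]
    exact_mod_cast hp.pos.ne'
  refine (Nat.card_eq_of_bijective
    (fun w => (⟨((p : ℤ) : GaussianInt) * w.1, ?_⟩ : ↥(Gs (p ^ 2 * m)))) ⟨?_, ?_⟩).symm
  · have hw := w.2
    simp only [Gs, Set.mem_setOf_eq] at hw ⊢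
    rw [Zsqrtd.norm_mul, Zsqrtd.norm_intCast, hw]
    push_cast
    ring
  · intro a b h
    have := congrArg Subtype.val h
    exact Subtype.ext (mul_left_cancel₀ hne this)
  · rintro ⟨z, hz⟩
    simp only [Gs, Set.mem_setOf_eq] at hz
    have hz' : (p : ℤ) ∣ z.re ^ 2 + z.im ^ 2 := by
      rw [← norm_eq', hz]
      exact ⟨(p : ℤ) * m, by push_cast; ring⟩
    obtain ⟨hre, him⟩ := dvd_of_dvd_sq_add_sq p hp hp3 _ _ hz'
    obtain ⟨r, hr⟩ := hre
    obtain ⟨s, hs⟩ := him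
    have hprod : ((p : ℤ) : GaussianInt) * ⟨r, s⟩ = z := by
      refine Zsqrtd.ext ?_ ?_ <;> simp [Zsqrtd.re_mul, Zsqrtd.im_mul] <;> omega
    have hwn : (⟨r, s⟩ : GaussianInt).norm = (m : ℤ) := by
      have h2 := congrArg Zsqrtd.norm hprod
      rw [Zsqrtd.norm_mul, Zsqrtd.norm_intCast, hz] at h2
      have hp0 : ((p : ℤ) * p) ≠ 0 :=
        mul_ne_zero (by exact_mod_cast hp.pos.ne') (by exact_mod_cast hp.pos.ne')
      apply mul_left_cancel₀ hp0
      rw [h2]; push_cast; ring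
    exact ⟨⟨⟨r, s⟩, hwn⟩, Subtype.ext hprod⟩

lemma Gs_empty (p n : ℕ) (hp : p.Prime) (hp3 : p % 4 = 3) (hd : p ∣ n) (hnd : ¬ p ^ 2 ∣ n) :
    (Gs n).ncard = 0 := by
  have : Gs n = ∅ := by
    ext z
    simp only [Gs, Set.mem_setOf_eq, Set.mem_empty_iff_false, iff_false]
    intro hz
    have hz' : (p : ℤ) ∣ z.re ^ 2 + z.im ^ 2 := by
      rw [← norm_eq', hz]
      exact Int.natCast_dvd_natCast.2 hd
    obtain ⟨hre, him⟩ := dvd_of_dvd_sq_add_sq p hp hp3 _ _ hz'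
    apply hnd
    obtain ⟨r, hr⟩ := hre
    obtain ⟨s, hs⟩ := him
    have : ((p : ℤ) ^ 2) ∣ (n : ℤ) := by
      rw [← hz, norm_eq', hr, hs]
      exact ⟨r ^ 2 + s ^ 2, by ring⟩
    exact_mod_cast Int.natCast_dvd_natCast.1 (by push_cast at this ⊢; exact this)
  simp [this]

lemma norm_pow' (z : GaussianInt) (k : ℕ) : (z ^ k).norm = z.norm ^ k :=
  map_pow (Zsqrtd.normMonoidHom) z k

lemma prime_of_norm (p : ℕ) (hp : p.Prime) (π : GaussianInt) (hπ : π.norm = (p : ℤ)) :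
    Prime π := by
  rw [← UniqueFactorizationMonoid.irreducible_iff_prime]
  constructor
  · intro hu
    have h1 := (Zsqrtd.norm_eq_one_iff' (by norm_num) π).2 hu
    rw [hπ] at h1
    exact hp.one_lt.ne' (by exact_mod_cast h1)
  · intro x y hxy
    have hn := congrArg Zsqrtd.norm hxy
    rw [hπ, Zsqrtd.norm_mul] at hn
    have habs : x.norm.natAbs * y.norm.natAbs = p := by
      rw [← Int.natAbs_mul, ← hn]; simp
    rcases hp.eq_one_or_self_of_dvd x.norm.natAbs ⟨y.norm.natAbs, habs.symm⟩ with h1 | h1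
    · exact Or.inl (Zsqrtd.norm_eq_one_iff.1 h1)
    · right
      apply Zsqrtd.norm_eq_one_iff.1
      rw [h1] at habs
      exact Nat.eq_of_mul_eq_mul_left hp.pos (by rw [mul_one]; exact habs)

lemma pi_not_dvd_star (p : ℕ) (hp : p.Prime) (hodd : p % 2 = 1) (π : GaussianInt)
    (hπ : π.norm = (p : ℤ)) : ¬ π ∣ star π := by
  intro h
  have hpZ : Prime (p : ℤ) := Int.prime_iff_natAbs_prime.2 (by simpa using hp)
  have hp2 : ¬ (p : ℤ) ∣ 2 := by
    intro hd
    have h2 := Int.le_of_dvd (by norm_num) hd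
    have hple : p ≤ 2 := by exact_mod_cast h2
    have := hp.two_le
    omega
  have h2a : π ∣ ((2 * π.re : ℤ) : GaussianInt) := by
    have he : π + star π = ((2 * π.re : ℤ) : GaussianInt) := by
      refine Zsqrtd.ext ?_ ?_ <;> simp <;> ring
    exact he ▸ dvd_add dvd_rfl h
  have h2b : π ∣ (⟨0, 2 * π.im⟩ : GaussianInt) := by
    have he : π - star π = (⟨0, 2 * π.im⟩ : GaussianInt) := by
      refine Zsqrtd.ext ?_ ?_ <;> simp <;> ring
    exact he ▸ dvd_sub dvd_rfl h
  have hna : (p : ℤ) ∣ (2 * π.re) * (2 * π.re) := by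
    have h' := norm_dvd_norm h2a
    rw [hπ, Zsqrtd.norm_intCast] at h'
    exact h'
  have hnb : (p : ℤ) ∣ (2 * π.im) * (2 * π.im) := by
    have h' := norm_dvd_norm h2b
    rw [hπ] at h'
    have he : (⟨0, 2 * π.im⟩ : GaussianInt).norm = (2 * π.im) * (2 * π.im) := by
      rw [Zsqrtd.norm_def]; ring
    rwa [he] at h'
  have hre : (p : ℤ) ∣ π.re := by
    rcases hpZ.dvd_mul.1 hna with h' | h' <;>
      rcases hpZ.dvd_mul.1 h' with h'' | h''
    all_goals first | exact h'' | exact absurd h'' hp2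
  have him : (p : ℤ) ∣ π.im := by
    rcases hpZ.dvd_mul.1 hnb with h' | h' <;>
      rcases hpZ.dvd_mul.1 h' with h'' | h''
    all_goals first | exact h'' | exact absurd h'' hp2
  obtain ⟨r, hr⟩ := hre
  obtain ⟨s, hs⟩ := him
  have h1 : π.norm = (p : ℤ) * (p : ℤ) * (r * r + s * s) := by
    rw [norm_eq', hr, hs]; ring
  have hg : (p : ℤ) = (p : ℤ) * (p : ℤ) * (r * r + s * s) := hπ.symm.trans h1
  have hplt : (1 : ℤ) < p := by exact_mod_cast hp.one_lt
  have hX : 0 ≤ r * r + s * s := by nlinarith [mul_self_nonneg r, mul_self_nonneg s]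
  rcases (by omega : r * r + s * s = 0 ∨ 1 ≤ r * r + s * s) with h0 | h0
  · rw [h0, mul_zero] at hg; linarith
  · nlinarith [hg, hplt, h0]

lemma descend (p : ℕ) (π : GaussianInt) (hπ : π.norm = (p : ℤ)) (hpr : Prime π) :
    ∀ (e : ℕ) (m : ℕ) (z : GaussianInt), z.norm = (p : ℤ) ^ e * m →
      ∃ j, j ≤ e ∧ ∃ w, z = π ^ j * (star π) ^ (e - j) * w ∧ w.norm = (m : ℤ) := by
  intro e
  induction e with
  | zero =>
    intro m z h
    exact ⟨0, le_refl 0, z, by simp, by simpa using h⟩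
  | succ e ih =>
    intro m z h
    have hpne : (p : ℤ) ≠ 0 := by
      intro h0
      rw [h0] at hπ
      exact hpr.ne_zero (by simpa [Zsqrtd.norm_eq_zero_iff] using hπ)
    have hps : π * star π = ((p : ℤ) : GaussianInt) := by
      rw [← Zsqrtd.norm_eq_mul_conj, hπ]
    have hdvd : π ∣ z * star z := by
      have h1 : π ∣ ((p : ℤ) : GaussianInt) := ⟨star π, hps.symm⟩
      have h2 : ((p : ℤ) : GaussianInt) ∣ ((z.norm : ℤ) : GaussianInt) := by
        rw [h]
        exact ⟨((p : ℤ) : GaussianInt) ^ e * ((m : ℤ) : GaussianInt), by push_cast; ring⟩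
      rw [Zsqrtd.norm_eq_mul_conj] at h2
      exact h1.trans h2
    rcases hpr.2.2 z (star z) hdvd with hz | hz
    · obtain ⟨z₁, rfl⟩ := hz
      have hn1 : z₁.norm = (p : ℤ) ^ e * m := by
        have h' := h
        rw [Zsqrtd.norm_mul, hπ] at h'
        apply mul_left_cancel₀ hpne
        rw [h']; ring
      obtain ⟨j, hj, w, rfl, hw⟩ := ih m z₁ hn1
      refine ⟨j + 1, by omega, w, ?_, hw⟩
      have he : e + 1 - (j + 1) = e - j := by omega
      rw [he, pow_succ]
      ring
    · obtain ⟨c, hc⟩ := hz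
      have hz1 : z = star π * star c := by
        have h' := congrArg star hc
        rw [star_star] at h'
        rw [h', star_mul]
        ring
      have hn1 : (star c).norm = (p : ℤ) ^ e * m := by
        have h' := h
        rw [hz1, Zsqrtd.norm_mul, Zsqrtd.norm_conj, hπ] at h'
        apply mul_left_cancel₀ hpne
        rw [h']; ring
      obtain ⟨j, hj, w, hweq, hw⟩ := ih m (star c) hn1
      refine ⟨j, by omega, w, ?_, hw⟩
      rw [hz1, hweq]
      have he : e + 1 - j = (e - j) + 1 := by omega
      rw [he, pow_succ]
      ring

lemma Gs_case1 (p m e : ℕ) (hp : p.Prime) (hp1 : p % 4 = 1) (hm : ¬ p ∣ m) :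
    (Gs (p ^ e * m)).ncard = (e + 1) * (Gs m).ncard := by
  haveI : Fact p.Prime := ⟨hp⟩
  obtain ⟨a, b, hab⟩ := Nat.Prime.sq_add_sq (p := p) (by omega)
  set π : GaussianInt := ⟨(a : ℤ), (b : ℤ)⟩ with hπdef
  have hπ : π.norm = (p : ℤ) := by
    rw [norm_eq']
    show ((a : ℤ)) ^ 2 + ((b : ℤ)) ^ 2 = (p : ℤ)
    exact_mod_cast hab
  have hpr := prime_of_norm p hp π hπ
  have hodd : p % 2 = 1 := by
    have := hp.two_le
    omega
  have hnds := pi_not_dvd_star p hp hodd π hπ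
  have hπne : π ≠ 0 := hpr.ne_zero
  have hsne : star π ≠ 0 := fun h => hπne (by simpa using congrArg star h)
  have hπw : ∀ w : GaussianInt, w.norm = (m : ℤ) → ¬ π ∣ w := by
    intro w hw hdvd
    have h' := norm_dvd_norm hdvd
    rw [hπ, hw] at h'
    exact hm (Int.ofNat_dvd.1 h')
  have key : ∀ (j₁ j₂ : ℕ) (w₁ w₂ : GaussianInt), j₁ ≤ j₂ → j₂ ≤ e →
      w₁.norm = (m : ℤ) → w₂.norm = (m : ℤ) →
      π ^ j₁ * (star π) ^ (e - j₁) * w₁ = π ^ j₂ * (star π) ^ (e - j₂) * w₂ →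
      j₁ = j₂ ∧ w₁ = w₂ := by
    intro j₁ j₂ w₁ w₂ h12 h2e hw₁ hw₂ heq
    have hj : j₁ = j₂ := by
      by_contra hne
      have hlt : j₁ < j₂ := lt_of_le_of_ne h12 hne
      have hpow : π ^ j₂ = π ^ j₁ * π ^ (j₂ - j₁) := by
        rw [← pow_add]
        congr 1
        omega
      have heq2 : π ^ j₁ * ((star π) ^ (e - j₁) * w₁) =
          π ^ j₁ * (π ^ (j₂ - j₁) * ((star π) ^ (e - j₂) * w₂)) := by
        rw [← mul_assoc, heq, hpow]
        ring
      have hcan := mul_left_cancel₀ (pow_ne_zero j₁ hπne) heq2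
      have hdvd : π ∣ (star π) ^ (e - j₁) * w₁ := by
        rw [hcan]
        exact Dvd.dvd.mul_right (dvd_pow_self π (by omega : j₂ - j₁ ≠ 0)) _
      rcases hpr.2.2 _ _ hdvd with h' | h'
      · exact hnds (hpr.dvd_of_dvd_pow h')
      · exact hπw w₁ hw₁ h'
    subst hj
    exact ⟨rfl, mul_left_cancel₀
      (mul_ne_zero (pow_ne_zero _ hπne) (pow_ne_zero _ hsne)) heq⟩
  have hGs : ∀ (j : ℕ), j ≤ e → ∀ w : GaussianInt, w.norm = (m : ℤ) →
      (π ^ j * (star π) ^ (e - j) * w).norm = ((p ^ e * m : ℕ) : ℤ) := by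
    intro j hj w hw
    rw [Zsqrtd.norm_mul, Zsqrtd.norm_mul, norm_pow', norm_pow', Zsqrtd.norm_conj, hπ, hw]
    have hpe : (p : ℤ) ^ j * (p : ℤ) ^ (e - j) = (p : ℤ) ^ e := by
      rw [← pow_add]
      congr 1
      omega
    push_cast
    rw [hpe]
  rw [← Nat.card_coe_set_eq, ← Nat.card_coe_set_eq]
  have hbij := Nat.card_eq_of_bijective
    (fun x : Fin (e + 1) × ↥(Gs m) =>
      (⟨π ^ (x.1 : ℕ) * (star π) ^ (e - (x.1 : ℕ)) * x.2.1,
        hGs _ (Nat.lt_succ_iff.1 x.1.isLt) _ x.2.2⟩ : ↥(Gs (p ^ e * m))))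
    ⟨?_, ?_⟩
  · rw [← hbij, Nat.card_prod]
    congr 1
    simp [Nat.card_eq_fintype_card]
  · rintro ⟨j₁, w₁⟩ ⟨j₂, w₂⟩ h
    have h' := congrArg Subtype.val h
    simp only at h'
    rcases le_total (j₁ : ℕ) (j₂ : ℕ) with hle | hle
    · obtain ⟨hj, hw⟩ := key _ _ _ _ hle (Nat.lt_succ_iff.1 j₂.isLt) w₁.2 w₂.2 h'
      exact Prod.ext (Fin.ext hj) (Subtype.ext hw)
    · obtain ⟨hj, hw⟩ := key _ _ _ _ hle (Nat.lt_succ_iff.1 j₁.isLt) w₂.2 w₁.2 h'.symm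
      exact Prod.ext (Fin.ext hj.symm) (Subtype.ext hw.symm)
  · rintro ⟨z, hz⟩
    have hz' : z.norm = (p : ℤ) ^ e * (m : ℤ) := by
      rw [hz]
      push_cast
      ring
    obtain ⟨j, hj, w, hzw, hw⟩ := descend p π hπ hpr e m z hz'
    exact ⟨(⟨j, by omega⟩, ⟨w, hw⟩), Subtype.ext hzw.symm⟩

lemma main_count : ∀ n : ℕ, 0 < n → (((Gs n).ncard : ℤ)) = 4 * Fd n := by
  intro n
  induction n using Nat.strong_induction_on with
  | _ n ih =>
    intro hn
    by_cases hone : n = 1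
    · subst hone
      rw [Gs_one]
      norm_num [Fd, chiMinusFour]
    · have h2 : 2 ≤ n := by omega
      have hq : n.minFac.Prime := Nat.minFac_prime (by omega)
      have hqd : n.minFac ∣ n := n.minFac_dvd
      by_cases hq2 : n.minFac = 2
      · have h2n : 2 ∣ n := hq2 ▸ hqd
        obtain ⟨m, hm⟩ := h2n
        have hmlt : m < n := by omega
        have hmpos : 0 < m := by omega
        rw [hm]
        calc ((Gs (2 * m)).ncard : ℤ) = ((Gs m).ncard : ℤ) := by rw [Gs_even]
          _ = 4 * Fd m := ih m hmlt hmpos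
          _ = 4 * Fd (2 * m) := by
              rw [Fd_even (2 * m) (by omega) ⟨m, rfl⟩,
                Nat.mul_div_cancel_left _ (by norm_num)]
      · have hodd : n.minFac % 2 = 1 := by
          rcases Nat.mod_two_eq_zero_or_one n.minFac with h | h
          · exact absurd ((Nat.Prime.even_iff hq).1 (Nat.even_iff.2 h)) hq2
          · exact h
        rcases (by omega : n.minFac % 4 = 1 ∨ n.minFac % 4 = 3) with hp1 | hp3
        · set p := n.minFac with hpdef
          set e := n.factorization p with he
          set m := n / p ^ e with hmdef
          have hnn : n ≠ 0 := by omega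
          have hordproj : p ^ e * m = n := Nat.ordProj_mul_ordCompl_eq_self n p
          have hcop : ¬ p ∣ m :=
            (Nat.Prime.coprime_iff_not_dvd hq).1 (Nat.coprime_ordCompl hq hnn)
          have he1 : 0 < e := Nat.Prime.factorization_pos_of_dvd hq hnn hqd
          have hmlt : m < n := Nat.div_lt_self hn (Nat.one_lt_pow (by omega) hq.one_lt)
          have hmpos : 0 < m := Nat.ordCompl_pos p hnn
          calc ((Gs n).ncard : ℤ) = ((Gs (p ^ e * m)).ncard : ℤ) := by rw [hordproj]
            _ = (((e + 1) * (Gs m).ncard : ℕ) : ℤ) := by rw [Gs_case1 p m e hq hp1 hcop]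
            _ = ((e : ℤ) + 1) * ((Gs m).ncard : ℤ) := by push_cast; ring
            _ = ((e : ℤ) + 1) * (4 * Fd m) := by rw [ih m hmlt hmpos]
            _ = 4 * (((n.factorization p : ℤ) + 1) * Fd (n / p ^ n.factorization p)) := by
                rw [← he, ← hmdef]; ring
            _ = 4 * Fd n := by rw [← Fd_case1 p n hq hp1 hn]
        · set p := n.minFac with hpdef
          by_cases hsq : p ^ 2 ∣ n
          · obtain ⟨m, hm⟩ := hsq
            have hmpos : 0 < m := by
              rcases Nat.eq_zero_or_pos m with h | h
              · subst h; simp at hm; omega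
              · exact h
            have hp2 : 2 ≤ p := hq.two_le
            have hmlt : m < n := by
              have hp4 : 4 ≤ p ^ 2 := by nlinarith
              nlinarith [hmpos]
            calc ((Gs n).ncard : ℤ) = ((Gs (p ^ 2 * m)).ncard : ℤ) := by rw [← hm]
              _ = ((Gs m).ncard : ℤ) := by rw [Gs_div_sq p m hq hp3]
              _ = 4 * Fd m := ih m hmlt hmpos
              _ = 4 * Fd (n / p ^ 2) := by
                  rw [hm, Nat.mul_div_cancel_left _ (pow_pos hq.pos 2)]
              _ = 4 * Fd n := by rw [← Fd_div_sq p n hq hp3 hn ⟨m, hm⟩]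
          · rw [Gs_empty p n hq hp3 hqd hsq, Fd_zero_of p n hq hp3 hn hqd hsq]
            simp

/-- `r₂(n) = 4·Σ_{d ∣ n} χ₋₄(d)`, where `r₂(n)` is the number of pairs `(p,q) ∈ ℤ²`
with `p² + q² = n`. -/
theorem stmt13 (n : ℕ) (hn : 0 < n) :
    (({x : ℤ × ℤ | x.1 ^ 2 + x.2 ^ 2 = (n : ℤ)}.ncard : ℤ)) =
      4 * ∑ d ∈ n.divisors, chiMinusFour d := by
  rw [ncard_S_eq n, main_count n hn]
  rfl
end

section
/- For Re(s) > 1, the Dedekind zeta function of ℚ(i) satisfies ζ_{ℚ(i)}(s) = ζ(s)·L(χ₋₄, s), where ζ is the Riemann zeta function and χ₋₄ the nontrivial character mod 4. -/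
open Ideal
local notation "ℤi" => GaussianInt

noncomputable def gaussEquiv : GaussianInt ≃ₗ[ℤ] (Fin 2 → ℤ) :=
  AddEquiv.toIntLinearEquiv
  { toFun := fun z => ![z.re, z.im]
    invFun := fun f => ⟨f 0, f 1⟩
    left_inv := fun z => by simp
    right_inv := fun f => by ext i; fin_cases i <;> simp
    map_add' := fun a b => by ext i; fin_cases i <;> simp }

lemma gaussEquiv_apply (x : GaussianInt) : gaussEquiv x = ![x.re, x.im] := rfl
lemma gaussEquiv_symm_apply (f : Fin 2 → ℤ) : gaussEquiv.symm f = ⟨f 0, f 1⟩ := rfl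

instance : Module.Free ℤ GaussianInt := Module.Free.of_equiv gaussEquiv.symm
instance : Module.Finite ℤ GaussianInt := Module.Finite.equiv gaussEquiv.symm

noncomputable def gaussBasis : Module.Basis (Fin 2) ℤ GaussianInt := Module.Basis.ofEquivFun gaussEquiv

theorem algNorm_eq (x : GaussianInt) : Algebra.norm ℤ x = Zsqrtd.norm x := by
  rw [Algebra.norm_eq_matrix_det gaussBasis, Matrix.det_fin_two]
  simp [Algebra.leftMulMatrix_eq_repr_mul, gaussBasis, Zsqrtd.norm,
    gaussEquiv_apply, gaussEquiv_symm_apply, Zsqrtd.re_mul, Zsqrtd.im_mul]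

theorem absNorm_span (x : GaussianInt) :
    Ideal.absNorm (Ideal.span {x}) = x.norm.natAbs := by
  rw [Ideal.absNorm_span_singleton, algNorm_eq]

/-- An ideal contained in an ideal of the same nonzero norm is equal to it. -/
theorem eq_of_le_absNorm {I J : Ideal ℤi} (h : J ≤ I) (hn : absNorm I = absNorm J)
    (h0 : absNorm I ≠ 0) : I = J := by
  obtain ⟨C, rfl⟩ := (Ideal.dvd_iff_le).mpr h
  have : absNorm I * absNorm C = absNorm I * 1 := by
    rw [mul_one, ← _root_.map_mul]; exact hn.symm ▸ rfl
  have hC : absNorm C = 1 := by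
    exact Nat.eq_of_mul_eq_mul_left (Nat.pos_of_ne_zero h0) this
  rw [absNorm_eq_one_iff.mp hC, mul_top]

theorem gauss_norm_natCast (m : ℕ) : Ideal.absNorm (span {(m : ℤi)}) = m ^ 2 := by
  rw [absNorm_span]
  have : ((m : ℤi)).norm = (m : ℤ) ^ 2 := by
    have : ((m : ℤi)) = ⟨(m : ℤ), 0⟩ := by ext <;> simp
    rw [this]; simp [Zsqrtd.norm]; ring
  rw [this]; simp [Int.natAbs_pow]

theorem split_coprime {m n : ℕ} (hmn : Nat.Coprime m n) (hm : m ≠ 0) (hn : n ≠ 0)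
    {K : Ideal ℤi} (hK : absNorm K = m * n) :
    absNorm (K ⊔ span {(m : ℤi)}) = m ∧ absNorm (K ⊔ span {(n : ℤi)}) = n ∧
      (K ⊔ span {(m : ℤi)}) * (K ⊔ span {(n : ℤi)}) = K := by
  set I := K ⊔ span {(m : ℤi)} with hI
  set J := K ⊔ span {(n : ℤi)} with hJ
  have hcop : IsCoprime ((m : ℤ)) ((n : ℤ)) := Int.isCoprime_iff_gcd_eq_one.mpr hmn
  have hcop2 : IsCoprime ((m : ℤi)) ((n : ℤi)) := by
    have := hcop.map (Int.castRingHom ℤi)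
    simpa using this
  have hsup : I ⊔ J = ⊤ := by
    rw [eq_top_iff, ← (Ideal.sup_eq_top_iff_isCoprime (m : ℤi) n).mpr hcop2]
    apply sup_le
    · exact le_trans le_sup_right le_sup_left
    · exact le_trans le_sup_right le_sup_right
  have hmul : I * J = K := by
    apply le_antisymm
    · rw [hI, hJ, Ideal.sup_mul, Ideal.mul_sup, Ideal.mul_sup]
      have h1 : K * K ≤ K := mul_le_right
      have h2 : K * span {(n : ℤi)} ≤ K := mul_le_left
      have h3 : span {(m : ℤi)} * K ≤ K := mul_le_right
      have h4 : span {(m : ℤi)} * span {(n : ℤi)} ≤ K := by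
        rw [Ideal.span_singleton_mul_span_singleton, ← Nat.cast_mul, ← hK,
          Ideal.span_le, Set.singleton_subset_iff]
        exact absNorm_mem K
      exact sup_le (sup_le h1 h2) (sup_le h3 h4)
    · rw [Ideal.mul_eq_inf_of_coprime hsup]
      exact le_inf le_sup_left le_sup_left
  have hdvdI : absNorm I ∣ m := by
    have d1 : absNorm I ∣ m * n := hK ▸ absNorm_dvd_absNorm_of_le le_sup_left
    have d2 : absNorm I ∣ m ^ 2 := gauss_norm_natCast m ▸ absNorm_dvd_absNorm_of_le
      (le_trans (le_of_eq rfl) le_sup_right)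
    have := Nat.dvd_gcd d1 d2
    rwa [pow_two, Nat.gcd_mul_left, Nat.Coprime.gcd_eq_one (Nat.Coprime.symm hmn), mul_one]
      at this
  have hdvdJ : absNorm J ∣ n := by
    have d1 : absNorm J ∣ m * n := hK ▸ absNorm_dvd_absNorm_of_le le_sup_left
    have d2 : absNorm J ∣ n ^ 2 := gauss_norm_natCast n ▸ absNorm_dvd_absNorm_of_le le_sup_right
    have := Nat.dvd_gcd d1 d2
    rw [mul_comm] at this
    rwa [pow_two, Nat.gcd_mul_left, Nat.Coprime.gcd_eq_one hmn, mul_one] at this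
  have hprod : absNorm I * absNorm J = m * n := by rw [← _root_.map_mul, hmul, hK]
  have hIm : absNorm I = m := by
    refine Nat.dvd_antisymm hdvdI ?_
    have h1 : m * n ∣ absNorm I * n := by
      rw [← hprod]; exact mul_dvd_mul_left _ hdvdJ
    exact (Nat.mul_dvd_mul_iff_right (Nat.pos_of_ne_zero hn)).mp h1
  have hJn : absNorm J = n := by
    refine Nat.dvd_antisymm hdvdJ ?_
    have h1 : n * m ∣ absNorm J * m := by
      rw [mul_comm n m, ← hprod, mul_comm (absNorm I)]; exact mul_dvd_mul_left _ hdvdI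
    exact (Nat.mul_dvd_mul_iff_right (Nat.pos_of_ne_zero hm)).mp h1
  exact ⟨hIm, hJn, hmul⟩

theorem card_norm_mul {m n : ℕ} (hmn : Nat.Coprime m n) (hm : m ≠ 0) (hn : n ≠ 0) :
    Nat.card {I : Ideal ℤi // absNorm I = m * n} =
      Nat.card {I : Ideal ℤi // absNorm I = m} * Nat.card {I : Ideal ℤi // absNorm I = n} := by
  rw [← Nat.card_prod]
  refine (Nat.card_congr (Equiv.ofBijective
    (fun p : {I : Ideal ℤi // absNorm I = m} × {I : Ideal ℤi // absNorm I = n} =>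
      (⟨p.1.1 * p.2.1, by rw [_root_.map_mul, p.1.2, p.2.2]⟩ :
        {I : Ideal ℤi // absNorm I = m * n})) ⟨?_, ?_⟩)).symm
  · rintro ⟨⟨I, hI⟩, ⟨J, hJ⟩⟩ ⟨⟨I', hI'⟩, ⟨J', hJ'⟩⟩ h
    simp only [Subtype.mk.injEq, Prod.mk.injEq] at h ⊢
    have key : ∀ (I J : Ideal ℤi), absNorm I = m → absNorm J = n →
        I = I * J ⊔ span {(m : ℤi)} := by
      intro I J hI hJ
      have hK : absNorm (I * J) = m * n := by rw [_root_.map_mul, hI, hJ]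
      obtain ⟨h1, -, -⟩ := split_coprime hmn hm hn hK
      refine eq_of_le_absNorm ?_ (by rw [hI, h1]) (hI ▸ hm)
      refine sup_le mul_le_left ?_
      rw [Ideal.span_le, Set.singleton_subset_iff, ← hI]
      exact absNorm_mem I
    have key2 : ∀ (I J : Ideal ℤi), absNorm I = m → absNorm J = n →
        J = I * J ⊔ span {(n : ℤi)} := by
      intro I J hI hJ
      have hK : absNorm (I * J) = m * n := by rw [_root_.map_mul, hI, hJ]
      obtain ⟨-, h2, -⟩ := split_coprime hmn hm hn hK
      refine eq_of_le_absNorm ?_ (by rw [hJ, h2]) (hJ ▸ hn)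
      refine sup_le mul_le_right ?_
      rw [Ideal.span_le, Set.singleton_subset_iff, ← hJ]
      exact absNorm_mem J
    constructor
    · rw [key I J hI hJ, key I' J' hI' hJ', h]
    · rw [key2 I J hI hJ, key2 I' J' hI' hJ', h]
  · rintro ⟨K, hK⟩
    obtain ⟨h1, h2, h3⟩ := split_coprime hmn hm hn hK
    exact ⟨⟨⟨_, h1⟩, ⟨_, h2⟩⟩, Subtype.ext h3⟩

theorem gauss_unit {u : GaussianInt} (hu : Zsqrtd.norm u = 1) :
    u = 1 ∨ u = -1 ∨ u = ⟨0,1⟩ ∨ u = ⟨0,-1⟩ := by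
  obtain ⟨a, b⟩ := u
  have h : a * a + b * b = 1 := by simpa [Zsqrtd.norm] using hu
  have h1 : -1 ≤ a ∧ a ≤ 1 := ⟨by nlinarith [mul_self_nonneg b], by nlinarith [mul_self_nonneg b]⟩
  have h2 : -1 ≤ b ∧ b ≤ 1 := ⟨by nlinarith [mul_self_nonneg a], by nlinarith [mul_self_nonneg a]⟩
  obtain ⟨h1a, h1b⟩ := h1; obtain ⟨h2a, h2b⟩ := h2
  interval_cases a <;> interval_cases b <;> simp_all [Zsqrtd.ext_iff]

lemma prime_ideal_eq_of_le {P M : Ideal ℤi} (hP : Prime P) (hM : M.IsMaximal) (h : P ≤ M) :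
    P = M :=
  Ideal.IsMaximal.eq_of_le ((Ideal.isPrime_of_prime hP).isMaximal hP.ne_zero) hM.ne_top h

lemma exists_max {p k : ℕ} {I : Ideal ℤi} (hI : absNorm I = p ^ k) (hk : p ^ k ≠ 1) :
    ∃ M : Ideal ℤi, M.IsMaximal ∧ I ≤ M ∧ (p : ℤi) ∈ M := by
  have htop : I ≠ ⊤ := fun h => hk (by rw [← hI, h, absNorm_top])
  obtain ⟨M, hM, hIM⟩ := Ideal.exists_le_maximal I htop
  have h1 : ((p ^ k : ℕ) : ℤi) ∈ M := hIM (hI ▸ absNorm_mem I)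
  have h2 : (p : ℤi) ^ k ∈ M := by push_cast at h1; exact h1
  exact ⟨M, hM, hIM, hM.isPrime.mem_of_pow_mem _ h2⟩

noncomputable def P2 : Ideal ℤi := span {(⟨1,1⟩ : GaussianInt)}

lemma P2_norm : absNorm P2 = 2 := by
  rw [P2, absNorm_span]; rfl

lemma prime_ideal_of_norm_prime {P : Ideal ℤi} (h : (absNorm P).Prime) : Prime P := by
  have hb : P ≠ ⊥ := fun hb => by rw [hb, absNorm_bot] at h; exact h.ne_zero rfl
  rw [Ideal.prime_iff_isPrime hb]
  exact Ideal.isPrime_of_irreducible_absNorm h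

lemma P2_prime : Prime P2 := prime_ideal_of_norm_prime (P2_norm ▸ Nat.prime_two)

lemma classify2 : ∀ k : ℕ, ∀ I : Ideal ℤi, absNorm I = 2 ^ k → I = P2 ^ k := by
  intro k
  induction k with
  | zero => intro I hI; simpa using absNorm_eq_one_iff.mp (by simpa using hI)
  | succ k IH =>
    intro I hI
    obtain ⟨M, hM, hIM, h2M⟩ := exists_max hI (Nat.one_lt_two_pow_iff.mpr (Nat.succ_ne_zero k)).ne'
    have hu : IsUnit (⟨0,-1⟩ : GaussianInt) :=
      IsUnit.of_mul_eq_one ⟨0,1⟩ (by decide)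
    have h2eq : (2 : ℤi) = (⟨1,1⟩ : GaussianInt) ^ 2 * ⟨0,-1⟩ := by decide
    have h2M' : (2 : ℤi) ∈ M := by exact_mod_cast h2M
    rw [h2eq] at h2M'
    have hmem : (⟨1,1⟩ : GaussianInt) ∈ M := by
      rcases hM.isPrime.mem_or_mem h2M' with h | h
      · exact hM.isPrime.mem_of_pow_mem _ h
      · exact absurd (M.eq_top_of_isUnit_mem h hu) hM.ne_top
    have hPM : P2 = M := prime_ideal_eq_of_le P2_prime hM
      ((span_singleton_le_iff_mem M).mpr hmem)
    obtain ⟨I', hI'⟩ := (Ideal.dvd_iff_le).mpr (hPM ▸ hIM)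
    have hn : absNorm P2 * absNorm I' = 2 ^ (k + 1) := by
      rw [← _root_.map_mul, ← hI', hI]
    rw [P2_norm, pow_succ] at hn
    have : absNorm I' = 2 ^ k := by omega
    rw [hI', IH I' this, pow_succ, mul_comm]

lemma count2 (k : ℕ) : Nat.card {I : Ideal ℤi // absNorm I = 2 ^ k} = 1 := by
  have : Unique {I : Ideal ℤi // absNorm I = 2 ^ k} :=
    { default := ⟨P2 ^ k, by rw [map_pow, P2_norm]⟩
      uniq := fun ⟨I, hI⟩ => Subtype.ext (classify2 k I hI) }
  exact Nat.card_unique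

section case3
variable {p : ℕ} (hp : p.Prime) (hp3 : p % 4 = 3)

include hp hp3 in
lemma P3_prime : Prime (span {(p : ℤi)} : Ideal ℤi) := by
  haveI : Fact p.Prime := ⟨hp⟩
  rw [Ideal.prime_iff_isPrime, Ideal.span_singleton_prime]
  · exact GaussianInt.prime_of_nat_prime_of_mod_four_eq_three p hp3
  · exact_mod_cast Nat.cast_ne_zero.mpr hp.ne_zero
  · simp only [ne_eq, span_singleton_eq_bot]
    exact_mod_cast Nat.cast_ne_zero.mpr hp.ne_zero

include hp hp3 in
lemma classify3 : ∀ k : ℕ, ∀ I : Ideal ℤi, absNorm I = p ^ k →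
    ∃ j, k = 2 * j ∧ I = (span {(p : ℤi)}) ^ j := by
  intro k
  induction k using Nat.strong_induction_on with
  | _ k IH =>
    intro I hI
    rcases Nat.eq_zero_or_pos k with rfl | hk
    · exact ⟨0, rfl, by simpa using absNorm_eq_one_iff.mp (by simpa using hI)⟩
    obtain ⟨M, hM, hIM, hpM⟩ := exists_max hI (Nat.one_lt_pow hk.ne' hp.one_lt).ne'
    have hPM : span {(p : ℤi)} = M := prime_ideal_eq_of_le (P3_prime hp hp3) hM
      ((span_singleton_le_iff_mem M).mpr hpM)
    obtain ⟨I', hI'⟩ := (Ideal.dvd_iff_le).mpr (hPM ▸ hIM)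
    have hn : absNorm (span {(p : ℤi)}) * absNorm I' = p ^ k := by
      rw [← _root_.map_mul, ← hI', hI]
    rw [gauss_norm_natCast] at hn
    have hk2 : 2 ≤ k := by
      by_contra hlt
      have hk1 : k = 1 := by omega
      subst hk1
      have hd : p ^ 2 ∣ p ^ 1 := ⟨absNorm I', hn.symm⟩
      exact absurd ((Nat.pow_dvd_pow_iff_le_right hp.one_lt).mp hd) (by omega)
    have hn' : absNorm I' = p ^ (k - 2) := by
      have hpk : p ^ k = p ^ 2 * p ^ (k - 2) := by rw [← pow_add]; congr 1; omega
      rw [hpk] at hn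
      exact Nat.eq_of_mul_eq_mul_left (pow_pos hp.pos 2) hn
    obtain ⟨j, hj, hIj⟩ := IH (k - 2) (by omega) I' hn'
    exact ⟨j + 1, by omega, by rw [hI', hIj, pow_succ, mul_comm]⟩

include hp hp3 in
lemma count3 (k : ℕ) : Nat.card {I : Ideal ℤi // absNorm I = p ^ k} =
    if k % 2 = 0 then 1 else 0 := by
  rcases Nat.even_or_odd k with ⟨j, hj⟩ | ⟨j, hj⟩
  · rw [if_pos (by omega)]
    have : Unique {I : Ideal ℤi // absNorm I = p ^ k} :=
      { default := ⟨(span {(p : ℤi)}) ^ j, by rw [map_pow, gauss_norm_natCast, ← pow_mul]; congr 1; omega⟩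
        uniq := fun ⟨I, hI⟩ => by
          obtain ⟨j', hj', hIj⟩ := classify3 hp hp3 k I hI
          have hjj : j' = j := by omega
          apply Subtype.ext
          show I = span {(p : ℤi)} ^ j
          rw [hIj, hjj] }
    exact Nat.card_unique
  · rw [if_neg (by omega)]
    have : IsEmpty {I : Ideal ℤi // absNorm I = p ^ k} := by
      constructor
      rintro ⟨I, hI⟩
      obtain ⟨j', hj', -⟩ := classify3 hp hp3 k I hI
      omega
    simp
end case3

section case1
variable {p : ℕ}

lemma no_sq (hp : p.Prime) : ∀ c : ℕ, c * c ≠ p := by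
  intro c hc
  rcases hp.eq_one_or_self_of_dvd c ⟨c, hc.symm⟩ with rfl | rfl
  · simp at hc; exact hp.one_lt.ne' (by omega)
  · nlinarith [hp.one_lt]

lemma classify1 {P Q : Ideal ℤi} (hp : p.Prime) (hP : Prime P) (hQ : Prime Q)
    (hPQ : P * Q = span {(p : ℤi)}) (hNP : absNorm P = p) (hNQ : absNorm Q = p) :
    ∀ k : ℕ, ∀ I : Ideal ℤi, absNorm I = p ^ k →
      ∃ j, j ≤ k ∧ I = P ^ j * Q ^ (k - j) := by
  intro k
  induction k with
  | zero =>
    intro I hI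
    exact ⟨0, le_refl 0, by simpa using absNorm_eq_one_iff.mp (by simpa using hI)⟩
  | succ k IH =>
    intro I hI
    obtain ⟨M, hM, hIM, hpM⟩ := exists_max hI (Nat.one_lt_pow (Nat.succ_ne_zero k) hp.one_lt).ne'
    have hPQM : P * Q ≤ M := by
      rw [hPQ]; exact (span_singleton_le_iff_mem M).mpr hpM
    have hcase : P = M ∨ Q = M := by
      rcases (hM.isPrime.mul_le).mp hPQM with h | h
      · exact Or.inl (prime_ideal_eq_of_le hP hM h)
      · exact Or.inr (prime_ideal_eq_of_le hQ hM h)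
    rcases hcase with hPM | hQM
    · obtain ⟨I', hI'⟩ := (Ideal.dvd_iff_le).mpr (hPM ▸ hIM)
      have hn : absNorm P * absNorm I' = p ^ (k + 1) := by rw [← _root_.map_mul, ← hI', hI]
      rw [hNP, pow_succ'] at hn
      have hn' : absNorm I' = p ^ k := Nat.eq_of_mul_eq_mul_left hp.pos hn
      obtain ⟨j, hj, hIj⟩ := IH I' hn'
      refine ⟨j + 1, by omega, ?_⟩
      rw [hI', hIj, show k + 1 - (j + 1) = k - j by omega, pow_succ]
      ring
    · obtain ⟨I', hI'⟩ := (Ideal.dvd_iff_le).mpr (hQM ▸ hIM)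
      have hn : absNorm Q * absNorm I' = p ^ (k + 1) := by rw [← _root_.map_mul, ← hI', hI]
      rw [hNQ, pow_succ'] at hn
      have hn' : absNorm I' = p ^ k := Nat.eq_of_mul_eq_mul_left hp.pos hn
      obtain ⟨j, hj, hIj⟩ := IH I' hn'
      refine ⟨j, by omega, ?_⟩
      rw [hI', hIj, show k + 1 - j = (k - j) + 1 by omega, pow_succ]
      ring

lemma inj1 {P Q : Ideal ℤi} (hP : Prime P) (hQ : Prime Q) (hne : P ≠ Q) {k : ℕ} :
    ∀ j j' : ℕ, j ≤ k → j' ≤ k → P ^ j * Q ^ (k - j) = P ^ j' * Q ^ (k - j') → j = j' := by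
  have key : ∀ j j' : ℕ, j ≤ k → j' ≤ k → j ≤ j' →
      P ^ j * Q ^ (k - j) = P ^ j' * Q ^ (k - j') → j = j' := by
    intro j j' hj hj' hle heq
    by_contra hne'
    obtain ⟨t, rfl⟩ : ∃ t, j' = j + t := ⟨j' - j, by omega⟩
    have ht1 : 1 ≤ t := by omega
    rw [show k - j = t + (k - (j + t)) by omega, pow_add, pow_add] at heq
    have hPj : P ^ j ≠ 0 := pow_ne_zero _ hP.ne_zero
    have hQk : Q ^ (k - (j + t)) ≠ 0 := pow_ne_zero _ hQ.ne_zero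
    have heq2 : Q ^ t = P ^ t := by
      have h1 : P ^ j * (Q ^ t * Q ^ (k - (j + t))) = P ^ j * (P ^ t * Q ^ (k - (j + t))) := by
        rw [heq]; ring
      have h2 := mul_left_cancel₀ hPj h1
      rw [mul_comm (Q ^ t), mul_comm (P ^ t)] at h2
      exact mul_left_cancel₀ hQk h2
    have hdvd : P ∣ Q ^ t := by
      rw [heq2]; exact dvd_pow_self P (by omega)
    have : P ∣ Q := hP.dvd_of_dvd_pow hdvd
    exact hne (prime_ideal_eq_of_le hQ
      ((Ideal.isPrime_of_prime hP).isMaximal hP.ne_zero) (Ideal.le_of_dvd this)).symm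
  intro j j' hj hj' heq
  rcases le_total j j' with h | h
  · exact key j j' hj hj' h heq
  · exact (key j' j hj' hj h heq.symm).symm

lemma count1 (hp : p.Prime) (hp1 : p % 4 = 1) (k : ℕ) :
    Nat.card {I : Ideal ℤi // absNorm I = p ^ k} = k + 1 := by
  haveI : Fact p.Prime := ⟨hp⟩
  have hnirr : ¬Irreducible (p : ℤi) := by
    intro hirr
    have := GaussianInt.mod_four_eq_three_of_nat_prime_of_prime p
      ((UniqueFactorizationMonoid.irreducible_iff_prime).mp hirr)
    omega
  obtain ⟨a, b, hab⟩ := GaussianInt.sq_add_sq_of_nat_prime_of_not_irreducible p hnirr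
  set π : GaussianInt := ⟨(a : ℤ), (b : ℤ)⟩ with hπ
  set π' : GaussianInt := ⟨(a : ℤ), -(b : ℤ)⟩ with hπ'
  have hnπ : Zsqrtd.norm π = (p : ℤ) := by
    rw [hπ]; simp [Zsqrtd.norm]; push_cast [← hab]; ring
  have hnπ' : Zsqrtd.norm π' = (p : ℤ) := by
    rw [hπ']; simp [Zsqrtd.norm]; push_cast [← hab]; ring
  set P : Ideal ℤi := span {π} with hP
  set Q : Ideal ℤi := span {π'} with hQ
  have hNP : absNorm P = p := by rw [hP, absNorm_span, hnπ]; simp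
  have hNQ : absNorm Q = p := by rw [hQ, absNorm_span, hnπ']; simp
  have hPprime : Prime P := prime_ideal_of_norm_prime (hNP ▸ hp)
  have hQprime : Prime Q := prime_ideal_of_norm_prime (hNQ ▸ hp)
  have hππ : π * π' = ((p : ℕ) : GaussianInt) := by
    ext
    · show π.re * π'.re + (-1) * π.im * π'.im = _
      simp [hπ, hπ']
      push_cast [← hab]
      ring
    · show π.re * π'.im + π.im * π'.re = _
      simp [hπ, hπ']
      ring
  have hPQ : P * Q = span {(p : ℤi)} := by
    rw [hP, hQ, Ideal.span_singleton_mul_span_singleton, hππ]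
  have hne : P ≠ Q := by
    intro heq
    have hmem : π' ∈ P := by rw [heq, hQ]; exact mem_span_singleton_self _
    rw [hP, mem_span_singleton] at hmem
    obtain ⟨u, hu⟩ := hmem
    have hnu : Zsqrtd.norm u = 1 := by
      have hp0 : (p : ℤ) ≠ 0 := Int.natCast_ne_zero.mpr hp.ne_zero
      have h1 : (p : ℤ) * Zsqrtd.norm u = (p : ℤ) := by
        conv_rhs => rw [← hnπ', hu]
        rw [Zsqrtd.norm_mul, hnπ]
      exact mul_left_cancel₀ hp0 (by rw [h1, mul_one])
    rcases gauss_unit hnu with rfl | rfl | rfl | rfl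
    · rw [mul_one] at hu
      have h2 := congrArg Zsqrtd.im hu
      simp [hπ, hπ'] at h2
      have hb : b = 0 := by omega
      exact no_sq hp a (by rw [← hab, hb]; ring)
    · have := congrArg Zsqrtd.re hu
      simp [hπ, hπ', Zsqrtd.re_mul] at this
      have ha : a = 0 := by omega
      exact no_sq hp b (by rw [← hab, ha]; ring)
    · have h1 := congrArg Zsqrtd.re hu
      have h2 := congrArg Zsqrtd.im hu
      simp [hπ, hπ', Zsqrtd.re_mul, Zsqrtd.im_mul] at h1 h2
      -- a = -b
      have : a = 0 ∧ b = 0 := by omega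
      have : p = 0 := by rw [← hab, this.1, this.2]; ring
      exact hp.ne_zero this
    · have h1 := congrArg Zsqrtd.re hu
      simp [hπ, hπ', Zsqrtd.re_mul] at h1
      -- a = b
      have hab2 : a = b := by omega
      have : 2 ∣ p := ⟨a * a, by rw [← hab, hab2]; ring⟩
      have : p = 2 := ((Nat.prime_dvd_prime_iff_eq Nat.prime_two hp).mp this).symm
      omega
  -- now the bijection
  have hnormjk : ∀ j : Fin (k + 1), absNorm (P ^ (j : ℕ) * Q ^ (k - (j : ℕ))) = p ^ k := by
    intro j
    rw [_root_.map_mul, map_pow, map_pow, hNP, hNQ, ← pow_add]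
    congr 1
    omega
  refine (Nat.card_congr (Equiv.ofBijective
    (fun j : Fin (k + 1) =>
      (⟨P ^ (j : ℕ) * Q ^ (k - (j : ℕ)), hnormjk j⟩ : {I : Ideal ℤi // absNorm I = p ^ k}))
    ⟨?_, ?_⟩)).symm.trans (by simp)
  · intro j j' h
    have := inj1 hPprime hQprime hne (j : ℕ) (j' : ℕ) (by omega) (by omega)
      (congrArg Subtype.val h)
    exact Fin.ext this
  · rintro ⟨I, hI⟩
    obtain ⟨j, hj, hIj⟩ := classify1 hp hPprime hQprime hPQ hNP hNQ k I hI
    exact ⟨⟨j, by omega⟩, Subtype.ext hIj.symm⟩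
end case1

noncomputable def aIdeal (n : ℕ) : ℕ := Nat.card {I : Ideal ℤi // absNorm I = n}

lemma aIdeal_one : aIdeal 1 = 1 := by
  have : Unique {I : Ideal ℤi // absNorm I = 1} :=
    { default := ⟨⊤, absNorm_top⟩
      uniq := fun ⟨I, hI⟩ => Subtype.ext (absNorm_eq_one_iff.mp hI) }
  exact Nat.card_unique

noncomputable def A : ArithmeticFunction ℤ :=
  ⟨fun n => if n = 0 then 0 else (aIdeal n : ℤ), rfl⟩

def X : ArithmeticFunction ℤ :=
  ⟨fun n => if n % 4 = 1 then 1 else if n % 4 = 3 then -1 else 0, by norm_num⟩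

lemma X_apply (n : ℕ) : X n = if n % 4 = 1 then 1 else if n % 4 = 3 then -1 else 0 := rfl

lemma X_mul (m n : ℕ) : X (m * n) = X m * X n := by
  simp only [X_apply]
  rw [Nat.mul_mod]
  have h4m : m % 4 < 4 := Nat.mod_lt _ (by norm_num)
  have h4n : n % 4 < 4 := Nat.mod_lt _ (by norm_num)
  set x := m % 4
  set y := n % 4
  interval_cases x <;> interval_cases y <;> norm_num

lemma X_pow (p j : ℕ) : X (p ^ j) = X p ^ j := by
  induction j with
  | zero => simp [X_apply]
  | succ j IH => rw [pow_succ, X_mul, IH, pow_succ]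

lemma X_mult : X.IsMultiplicative :=
  ⟨by simp [X_apply], fun _ => X_mul _ _⟩

lemma A_mult : A.IsMultiplicative := by
  constructor
  · show (if (1 : ℕ) = 0 then (0:ℤ) else (aIdeal 1 : ℤ)) = 1
    simp [aIdeal_one]
  · intro m n hmn
    show (if m * n = 0 then (0:ℤ) else (aIdeal (m * n) : ℤ)) = _
    rcases Nat.eq_zero_or_pos m with rfl | hm
    · have hn1 : n = 1 := by simpa using hmn
      subst hn1
      simp [A, aIdeal_one]
    rcases Nat.eq_zero_or_pos n with rfl | hn
    · have hm1 : m = 1 := by simpa using hmn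
      subst hm1
      simp [A, aIdeal_one]
    rw [if_neg (by positivity)]
    show _ = (if m = 0 then (0:ℤ) else (aIdeal m : ℤ)) * (if n = 0 then (0:ℤ) else (aIdeal n : ℤ))
    rw [if_neg hm.ne', if_neg hn.ne']
    have hcm : aIdeal (m * n) = aIdeal m * aIdeal n := card_norm_mul hmn hm.ne' hn.ne'
    rw [hcm]
    push_cast
    ring

lemma A_eq : A = ↑ArithmeticFunction.zeta * X := by
  refine (ArithmeticFunction.IsMultiplicative.eq_iff_eq_on_prime_powers A A_mult _
    (ArithmeticFunction.isMultiplicative_zeta.natCast.mul X_mult)).mpr ?_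
  intro p k hp
  rw [ArithmeticFunction.coe_zeta_mul_apply, Nat.sum_divisors_prime_pow hp]
  simp_rw [X_pow]
  have hA : A (p ^ k) = (aIdeal (p ^ k) : ℤ) := by
    show (if p ^ k = 0 then (0:ℤ) else (aIdeal (p ^ k) : ℤ)) = (aIdeal (p ^ k) : ℤ)
    rw [if_neg (pow_ne_zero _ hp.ne_zero)]
  by_cases hp1 : p % 4 = 1
  · have hXp : X p = 1 := by rw [X_apply, if_pos hp1]
    have hc : aIdeal (p ^ k) = k + 1 := count1 hp hp1 k
    rw [hA, hc, hXp]
    simp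
  by_cases hp3 : p % 4 = 3
  · have hXp : X p = -1 := by rw [X_apply, if_neg (by omega), if_pos hp3]
    have hc : aIdeal (p ^ k) = if k % 2 = 0 then 1 else 0 := count3 hp hp3 k
    rw [hA, hc, hXp, neg_one_geom_sum]
    by_cases hk : k % 2 = 0
    · rw [if_pos hk, if_neg (by rw [Nat.even_add_one, Nat.even_iff]; omega)]; norm_num
    · rw [if_neg hk, if_pos (by rw [Nat.even_add_one, Nat.even_iff]; omega)]; norm_num
  · have h2 : p % 2 = 0 := by omega
    have hp2 : p = 2 := ((Nat.prime_dvd_prime_iff_eq Nat.prime_two hp).mp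
      (Nat.dvd_of_mod_eq_zero h2)).symm
    subst hp2
    have hXp : X 2 = 0 := by rw [X_apply]; norm_num
    have hc : aIdeal (2 ^ k) = 1 := count2 k
    rw [hA, hc, hXp, Finset.sum_range_succ']
    simp

open LSeries
open scoped LSeries.notation

noncomputable def χc : ℕ → ℂ := fun n => if n % 4 = 1 then 1 else if n % 4 = 3 then -1 else 0

lemma Xc (d : ℕ) : ((X d : ℤ) : ℂ) = χc d := by
  rw [X_apply, χc]
  split_ifs <;> simp

lemma aIdeal_eq_sum {n : ℕ} (hn : n ≠ 0) :
    (aIdeal n : ℂ) = ∑ d ∈ n.divisors, χc d := by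
  have h := congrArg (fun f : ArithmeticFunction ℤ => f n) A_eq
  simp only [ArithmeticFunction.coe_zeta_mul_apply] at h
  have hA : A n = (aIdeal n : ℤ) := by
    show (if n = 0 then (0:ℤ) else (aIdeal n : ℤ)) = (aIdeal n : ℤ)
    rw [if_neg hn]
  rw [hA] at h
  have h2 := congrArg (Int.cast : ℤ → ℂ) h
  push_cast at h2
  rw [h2]
  exact Finset.sum_congr rfl fun d _ => Xc d

lemma conv_apply (n : ℕ) :
    ((1 : ℕ → ℂ) ⍟ χc) n = if n = 0 then 0 else (aIdeal n : ℂ) := by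
  rcases eq_or_ne n 0 with rfl | hn
  · rw [if_pos rfl, LSeries.convolution_map_zero]
  · rw [if_neg hn, LSeries.convolution_def, aIdeal_eq_sum hn]
    simp only [Pi.one_apply, one_mul]
    exact Nat.sum_divisorsAntidiagonal' (f := fun _ m => χc m)

/-- the fibers of the norm map -/
def fiberEquiv (n : ℕ) (hn : n ≠ 0) :
    {x : {I : Ideal ℤi // I ≠ ⊥} // absNorm x.1 = n} ≃ {I : Ideal ℤi // absNorm I = n} where
  toFun := fun x => ⟨x.1.1, x.2⟩
  invFun := fun I => ⟨⟨I.1, fun hb => hn (by rw [← I.2, hb, absNorm_bot])⟩, I.2⟩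
  left_inv := fun x => by ext; rfl
  right_inv := fun I => rfl

instance fiberFinite (n : ℕ) : Finite {x : {I : Ideal ℤi // I ≠ ⊥} // absNorm x.1 = n} := by
  haveI : Finite {I : Ideal ℤi // absNorm I = n} := (Ideal.finite_setOf_absNorm_eq n).to_subtype
  exact Finite.of_injective (fun x => (⟨x.1.1, x.2⟩ : {I : Ideal ℤi // absNorm I = n}))
    (fun x y h => Subtype.ext (Subtype.ext (by simpa using congrArg Subtype.val h)))

instance fiberEmpty : IsEmpty {x : {I : Ideal ℤi // I ≠ ⊥} // absNorm x.1 = 0} :=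
  ⟨fun x => x.1.2 (absNorm_eq_zero_iff.mp x.2)⟩

lemma fiber_card (n : ℕ) : Nat.card {x : {I : Ideal ℤi // I ≠ ⊥} // absNorm x.1 = n} =
    if n = 0 then 0 else aIdeal n := by
  rcases eq_or_ne n 0 with rfl | hn
  · simp
  · rw [if_neg hn]
    exact Nat.card_congr (fiberEquiv n hn)

/-- For `Re(s) > 1`, the Dedekind zeta function of `ℚ(i)` (the sum of `N(𝔞)^{-s}` over the
nonzero ideals `𝔞` of `ℤ[i]`, with `N(𝔞) = |ℤ[i]/𝔞|`) factors as `ζ(s)·L(χ₋₄, s)`. -/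
theorem stmt16 (s : ℂ) (hs : 1 < s.re) :
    ∑' I : {I : Ideal GaussianInt // I ≠ ⊥}, (Nat.card (GaussianInt ⧸ I.1) : ℂ) ^ (-s) =
      riemannZeta s *
        ∑' n : ℕ, (if n % 4 = 1 then (1 : ℂ) else if n % 4 = 3 then -1 else 0) *
          (n : ℂ) ^ (-s) := by
  have hsum1 : LSeriesSummable 1 s := LSeriesSummable_one_iff.mpr hs
  have hsumχ : LSeriesSummable χc s := by
    refine LSeriesSummable_of_bounded_of_one_lt_re (m := 1) (fun n _ => ?_) hs
    rw [χc]
    split_ifs <;> simp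
  have hsumconv : LSeriesSummable ((1 : ℕ → ℂ) ⍟ χc) s := hsum1.convolution hsumχ
  have hterm : ∀ n : ℕ, term ((1 : ℕ → ℂ) ⍟ χc) s n
      = (if n = 0 then 0 else (aIdeal n : ℂ)) * (n : ℂ) ^ (-s) := by
    intro n
    rcases eq_or_ne n 0 with rfl | hn
    · simp
    · rw [LSeries.term_of_ne_zero hn, conv_apply, if_neg hn, Complex.cpow_neg,
        div_eq_mul_inv]
  -- fiberwise sums
  have hfib : ∀ n : ℕ, ∑' _x : {x : {I : Ideal ℤi // I ≠ ⊥} // absNorm x.1 = n},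
      ((n : ℂ)) ^ (-s) = term ((1 : ℕ → ℂ) ⍟ χc) s n := by
    intro n
    haveI := Fintype.ofFinite {x : {I : Ideal ℤi // I ≠ ⊥} // absNorm x.1 = n}
    rw [tsum_fintype, Finset.sum_const, Finset.card_univ, ← Nat.card_eq_fintype_card,
      fiber_card n, hterm n, nsmul_eq_mul]
    rcases eq_or_ne n 0 with rfl | hn
    · simp
    · rw [if_neg hn, if_neg hn]
  have hfibnorm : ∀ n : ℕ, ∑' _x : {x : {I : Ideal ℤi // I ≠ ⊥} // absNorm x.1 = n},
      ‖((n : ℂ)) ^ (-s)‖ = ‖term ((1 : ℕ → ℂ) ⍟ χc) s n‖ := by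
    intro n
    haveI := Fintype.ofFinite {x : {I : Ideal ℤi // I ≠ ⊥} // absNorm x.1 = n}
    rw [tsum_fintype, Finset.sum_const, Finset.card_univ, ← Nat.card_eq_fintype_card,
      fiber_card n, hterm n, nsmul_eq_mul, norm_mul]
    rcases eq_or_ne n 0 with rfl | hn
    · simp
    · rw [if_neg hn, if_neg hn, Complex.norm_natCast]
  -- summability on the sigma type
  have hnormsum : Summable fun n : ℕ => ‖term ((1 : ℕ → ℂ) ⍟ χc) s n‖ :=
    summable_norm_iff.mpr hsumconv
  set F : (Σ n : ℕ, {x : {I : Ideal ℤi // I ≠ ⊥} // absNorm x.1 = n}) → ℂ :=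
    fun x => ((x.1 : ℕ) : ℂ) ^ (-s) with hF
  have hFnorm : Summable fun x => ‖F x‖ := by
    refine (summable_sigma_of_nonneg (fun _ => norm_nonneg _)).mpr ⟨fun n => ?_, ?_⟩
    · exact Summable.of_finite
    · exact hnormsum.congr (fun n => (hfibnorm n).symm)
  have hFsum : Summable F := hFnorm.of_norm
  -- the main computation
  have hquot : (fun I : {I : Ideal ℤi // I ≠ ⊥} => (Nat.card (GaussianInt ⧸ I.1) : ℂ) ^ (-s))
      = fun I => ((absNorm I.1 : ℕ) : ℂ) ^ (-s) := by
    funext I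
    rw [absNorm_apply, Submodule.cardQuot_apply]
  rw [hquot]
  have key : ∑' I : {I : Ideal ℤi // I ≠ ⊥}, ((absNorm I.1 : ℕ) : ℂ) ^ (-s)
      = LSeries ((1 : ℕ → ℂ) ⍟ χc) s := by
    rw [← (Equiv.sigmaFiberEquiv (fun I : {I : Ideal ℤi // I ≠ ⊥} => absNorm I.1)).tsum_eq
      (fun I => ((absNorm I.1 : ℕ) : ℂ) ^ (-s))]
    have hxx : ∀ x : (Σ n : ℕ, {x : {I : Ideal ℤi // I ≠ ⊥} // absNorm x.1 = n}),
        ((absNorm ((Equiv.sigmaFiberEquiv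
          (fun I : {I : Ideal ℤi // I ≠ ⊥} => absNorm I.1)) x).1 : ℕ) : ℂ) ^ (-s) = F x := by
      rintro ⟨n, x, hx⟩
      simp only [Equiv.sigmaFiberEquiv, Equiv.coe_fn_mk, hF]
      rw [hx]
    rw [tsum_congr hxx, Summable.tsum_sigma hFsum]
    exact tsum_congr fun n => hfib n
  rw [key, LSeries_convolution' hsum1 hsumχ, LSeries_one_eq_riemannZeta hs]
  congr 1
  refine tsum_congr fun n => ?_
  rcases eq_or_ne n 0 with rfl | hn
  · simp
  · rw [LSeries.term_of_ne_zero hn, Complex.cpow_neg, div_eq_mul_inv]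
    rfl
end

section
/- The Hurwitz zeta function ζ(s,α) = Σ_{n≥0} (n+α)^{-s} (for α > 0) satisfies lim_{s→1} (ζ(s,α) - 1/(s-1)) = -Γ'(α)/Γ(α), where Γ is the Gamma function. -/
open Filter

section AuxStmt18
open Set Topology

lemma psi_limit (α : ℝ) (hα : 0 < α) :
    Tendsto (fun N : ℕ => Real.log (N + α) - ∑ k ∈ Finset.range N, ((k : ℝ) + α)⁻¹)
      atTop (𝓝 (deriv Real.Gamma α / Real.Gamma α)) := by
  set f := Real.log ∘ Real.Gamma with hf
  have hder : ∀ {x : ℝ}, 0 < x → DifferentiableAt ℝ f x := fun {x} hx => by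
    refine ((Real.differentiableAt_Gamma ?_).log (Real.Gamma_ne_zero ?_)) <;>
      exact fun m => ((neg_nonpos.mpr (Nat.cast_nonneg m)).trans_lt hx).ne'
  have h_rec : ∀ x : ℝ, 0 < x → f (x + 1) = f x + Real.log x := fun x hx => by
    simp only [f, Function.comp_apply, Real.Gamma_add_one hx.ne',
      Real.log_mul hx.ne' (Real.Gamma_pos_of_pos hx).ne', add_comm]
  have hder_rec : ∀ x : ℝ, 0 < x → deriv f (x + 1) = deriv f x + 1 / x := fun x hx => by
    rw [← deriv_comp_add_const, one_div, ← Real.deriv_log,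
      ← deriv_add (hder hx) (Real.differentiableAt_log hx.ne')]
    apply Filter.EventuallyEq.deriv_eq
    filter_upwards [eventually_gt_nhds hx] using h_rec
  have hder_nat : ∀ n : ℕ, deriv f (α + n) = deriv f α + ∑ k ∈ Finset.range n, ((k : ℝ) + α)⁻¹ := by
    intro n
    induction n with
    | zero => simp
    | succ n ih =>
      have : α + (n + 1 : ℕ) = (α + n) + 1 := by push_cast; ring
      rw [this, hder_rec _ (by positivity), ih, Finset.sum_range_succ]
      rw [one_div, add_comm α (n:ℝ)]
      ring
  have hc : ConvexOn ℝ (Ioi 0) f := Real.convexOn_log_Gamma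
  -- sandwich for deriv f (x+1)
  have lb : ∀ x : ℝ, 0 < x → Real.log x ≤ deriv f (x + 1) := by
    intro x hx
    refine (le_of_eq ?_).trans <| hc.slope_le_deriv (mem_Ioi.mpr hx)
      (by positivity : (0:ℝ) < x + 1) (by linarith) (hder (by positivity))
    rw [slope_def_field, show x + 1 - x = (1 : ℝ) by ring, div_one, h_rec x hx,
      add_sub_cancel_left]
  have ub : ∀ x : ℝ, 0 < x → deriv f (x + 1) ≤ Real.log (x + 1) := by
    intro x hx
    refine (hc.deriv_le_slope (by positivity : (0:ℝ) < x + 1)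
      (by positivity : (0:ℝ) < x + 2) (by linarith) (hder (by positivity))).trans (le_of_eq ?_)
    rw [slope_def_field, show x + 2 - (x + 1) = (1 : ℝ) by ring, div_one,
      show x + 2 = (x + 1) + 1 by ring, h_rec (x + 1) (by positivity), add_sub_cancel_left]
  -- squeeze
  have key : ∀ n : ℕ, deriv f α ≤ Real.log ((n+1 : ℕ) + α) - ∑ k ∈ Finset.range (n+1), ((k:ℝ)+α)⁻¹
      ∧ Real.log ((n+1 : ℕ) + α) - ∑ k ∈ Finset.range (n+1), ((k:ℝ)+α)⁻¹
        ≤ deriv f α + (Real.log (α + n + 1) - Real.log (α + n)) := by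
    intro n
    have h1 : Real.log (α + n) ≤ deriv f α + ∑ k ∈ Finset.range (n+1), ((k:ℝ)+α)⁻¹ := by
      have := lb (α + n) (by positivity)
      rw [show (α + (n:ℝ)) + 1 = α + ((n+1 : ℕ) : ℝ) by push_cast; ring, hder_nat (n+1)] at this
      exact this
    have h2 : deriv f α + ∑ k ∈ Finset.range (n+1), ((k:ℝ)+α)⁻¹ ≤ Real.log (α + n + 1) := by
      have := ub (α + n) (by positivity)
      rw [show (α + (n:ℝ)) + 1 = α + ((n+1 : ℕ) : ℝ) by push_cast; ring, hder_nat (n+1)] at this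
      rw [show α + (n:ℝ) + 1 = α + ((n+1:ℕ) : ℝ) by push_cast; ring]
      exact this
    constructor
    · rw [le_sub_iff_add_le, show ((n+1:ℕ):ℝ) + α = α + (n:ℝ) + 1 by push_cast; ring]
      exact h2
    · rw [sub_le_iff_le_add, show ((n+1:ℕ):ℝ) + α = α + (n:ℝ) + 1 by push_cast; ring]
      linarith
  have hlog0 : Tendsto (fun n : ℕ => Real.log (α + n + 1) - Real.log (α + n)) atTop (𝓝 0) := by
    have hb : ∀ n : ℕ, Real.log (α + n + 1) - Real.log (α + n) ≤ (α + n)⁻¹ := by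
      intro n
      rw [← Real.log_div (by positivity) (by positivity)]
      have := Real.log_le_sub_one_of_pos
        (show (0:ℝ) < (α + n + 1) / (α + n) by positivity)
      calc Real.log ((α + n + 1) / (α + n)) ≤ (α + n + 1) / (α + n) - 1 := this
        _ = (α + n)⁻¹ := by field_simp; ring
    have h0 : ∀ n : ℕ, 0 ≤ Real.log (α + n + 1) - Real.log (α + n) := by
      intro n
      have := Real.log_le_log (by positivity : (0:ℝ) < α + n) (by linarith : (α:ℝ) + n ≤ α + n + 1)
      linarith
    refine squeeze_zero h0 hb ?_
    have : Tendsto (fun n : ℕ => α + (n:ℝ)) atTop atTop :=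
      tendsto_atTop_add_const_left _ _ tendsto_natCast_atTop_atTop
    exact this.inv_tendsto_atTop
  have hmain : Tendsto (fun n : ℕ =>
      Real.log ((n+1 : ℕ) + α) - ∑ k ∈ Finset.range (n+1), ((k:ℝ)+α)⁻¹) atTop (𝓝 (deriv f α)) := by
    refine tendsto_of_tendsto_of_tendsto_of_le_of_le
      tendsto_const_nhds ?_ (fun n => (key n).1) (fun n => (key n).2)
    simpa using tendsto_const_nhds.add hlog0
  have : Tendsto (fun N : ℕ => Real.log (N + α) - ∑ k ∈ Finset.range N, ((k:ℝ)+α)⁻¹)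
      atTop (𝓝 (deriv f α)) := by
    rw [← tendsto_add_atTop_iff_nat 1]
    exact hmain
  convert this using 2
  rw [hf, Function.comp_def, deriv.log (Real.differentiableAt_Gamma
      (fun m => ((neg_nonpos.mpr (Nat.cast_nonneg m)).trans_lt hα).ne'))
    (Real.Gamma_ne_zero fun m => ((neg_nonpos.mpr (Nat.cast_nonneg m)).trans_lt hα).ne')]


lemma slope_cpow_tendsto (c : ℝ) (hc : 0 < c) :
    Tendsto (fun s : ℂ => (((c : ℂ)) ^ ((1 : ℂ) - s) - 1) / (s - 1)) (𝓝[≠] (1 : ℂ))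
      (𝓝 (-(Real.log c : ℂ))) := by
  have hc0 : (c : ℂ) ≠ 0 := Complex.ofReal_ne_zero.mpr hc.ne'
  set ℓ : ℂ → ℂ := fun s => (c : ℂ) ^ ((1 : ℂ) - s) with hℓ
  have hderiv : HasDerivAt ℓ (-(Real.log c : ℂ)) 1 := by
    have h1 : HasDerivAt (fun s : ℂ => ((1 : ℂ) - s) * Complex.log c)
        (-Complex.log c) 1 := by
      simpa using (((hasDerivAt_id (1:ℂ)).const_sub 1).mul_const (Complex.log c))
    have h2 := h1.cexp
    have he : ∀ s : ℂ, Complex.exp (((1:ℂ) - s) * Complex.log c) = ℓ s := fun s => by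
      simp only [hℓ]
      rw [Complex.cpow_def_of_ne_zero hc0, mul_comm]
    rw [funext he] at h2
    rw [sub_self, zero_mul, Complex.exp_zero, one_mul, ← Complex.ofReal_log hc.le] at h2
    exact h2
  have := hasDerivAt_iff_tendsto_slope.mp hderiv
  refine this.congr' ?_
  filter_upwards [self_mem_nhdsWithin] with s hs
  rw [slope_def_field, hℓ]
  simp only [sub_self, Complex.cpow_zero]

lemma hasDerivAt_cpow_aux {s : ℂ} (hs0 : s ≠ 0) {x : ℝ} (hx : 0 < x) :
    HasDerivAt (fun y : ℝ => ((y : ℂ)) ^ (-s)) ((-s) * (x : ℂ) ^ (-s - 1)) x := by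
  have h := hasDerivAt_ofReal_cpow_const' hx.ne' (r := -s - 1)
    (fun h => hs0 (by linear_combination -h))
  have h' := h.const_mul (-s)
  refine h'.congr_of_eventuallyEq ?_
  filter_upwards with y
  rw [show -s - 1 + 1 = -s by ring]
  field_simp

lemma t_bound {a : ℝ} (ha : 0 < a) {s : ℂ} (hs : 1 ≤ s.re) (hs1 : s ≠ 1) :
    ‖((a : ℂ)) ^ (-s) - (((a : ℂ)) ^ ((1:ℂ) - s) - (((a : ℝ) + 1 : ℝ) : ℂ) ^ ((1:ℂ) - s)) / (s - 1)‖
      ≤ ‖s‖ * a ^ (-s.re - 1) := by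
  have hs0 : s ≠ 0 := by
    intro h; rw [h] at hs; simp at hs; linarith
  -- inner bound
  have inner : ∀ x ∈ Icc a (a + 1), ‖(a:ℂ) ^ (-s) - (x:ℂ) ^ (-s)‖ ≤ ‖s‖ * a ^ (-s.re - 1) := by
    intro x hx
    have key : ∀ u ∈ Icc a x, ‖deriv (fun y : ℝ => ((y:ℂ)) ^ (-s)) u‖ ≤ ‖s‖ * a ^ (-s.re - 1) := by
      intro u hu
      have hu0 : 0 < u := lt_of_lt_of_le ha hu.1
      rw [(hasDerivAt_cpow_aux hs0 hu0).deriv, norm_mul, norm_neg]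
      have : ‖(u:ℂ) ^ (-s - 1)‖ = u ^ (-s.re - 1) := by
        rw [Complex.norm_cpow_eq_rpow_re_of_pos hu0]
        norm_num
      rw [this]
      exact mul_le_mul_of_nonneg_left
        (Real.rpow_le_rpow_of_nonpos ha hu.1 (by linarith)) (norm_nonneg s)
    have := Convex.norm_image_sub_le_of_norm_deriv_le
      (fun u hu => (hasDerivAt_cpow_aux hs0 (lt_of_lt_of_le ha hu.1)).differentiableAt)
      key (convex_Icc a x) (left_mem_Icc.mpr hx.1) (right_mem_Icc.mpr hx.1)
    calc ‖(a:ℂ) ^ (-s) - (x:ℂ) ^ (-s)‖ = ‖(x:ℂ) ^ (-s) - (a:ℂ) ^ (-s)‖ := norm_sub_rev _ _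
      _ ≤ ‖s‖ * a ^ (-s.re - 1) * ‖x - a‖ := this
      _ ≤ ‖s‖ * a ^ (-s.re - 1) * 1 := by
          refine mul_le_mul_of_nonneg_left ?_ (by positivity)
          rw [Real.norm_eq_abs, _root_.abs_of_nonneg (by linarith [hx.1] : (0:ℝ) ≤ x - a)]; linarith [hx.2]
      _ = ‖s‖ * a ^ (-s.re - 1) := mul_one _
  -- outer MVT with φ x = (a:ℂ)^(-s) * x - (x:ℂ)^(1-s)/(1-s)
  have h1s : (1:ℂ) - s ≠ 0 := sub_ne_zero.mpr (fun h => hs1 h.symm)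
  set φ : ℝ → ℂ := fun x => (a:ℂ) ^ (-s) * x - (x:ℂ) ^ ((1:ℂ) - s) / ((1:ℂ) - s) with hφ
  have hφderiv : ∀ x ∈ Icc a (a+1), HasDerivAt φ ((a:ℂ) ^ (-s) - (x:ℂ) ^ (-s)) x := by
    intro x hx
    have hx0 : 0 < x := lt_of_lt_of_le ha hx.1
    have h2 : HasDerivAt (fun y : ℝ => ((y:ℂ)) ^ ((1:ℂ) - s) / ((1:ℂ) - s)) ((x:ℂ) ^ (-s)) x := by
      have := hasDerivAt_ofReal_cpow_const' hx0.ne' (r := -s)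
        (fun h => hs1 (by linear_combination -h))
      simpa [show -s + 1 = (1:ℂ) - s by ring] using this
    have h3 : HasDerivAt (fun y : ℝ => (a:ℂ) ^ (-s) * (y:ℂ)) ((a:ℂ) ^ (-s)) x := by
      simpa using (Complex.ofRealCLM.hasDerivAt (x := x)).const_mul ((a:ℂ) ^ (-s))
    exact h3.sub h2
  have hφdiff : ∀ x ∈ Icc a (a+1), DifferentiableAt ℝ φ x :=
    fun x hx => (hφderiv x hx).differentiableAt
  have hbound : ∀ x ∈ Icc a (a+1), ‖deriv φ x‖ ≤ ‖s‖ * a ^ (-s.re - 1) := by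
    intro x hx
    rw [(hφderiv x hx).deriv]
    exact inner x hx
  have := Convex.norm_image_sub_le_of_norm_deriv_le hφdiff hbound (convex_Icc a (a+1))
    (left_mem_Icc.mpr (by linarith)) (right_mem_Icc.mpr (by linarith))
  have heq : φ (a+1) - φ a = (a:ℂ) ^ (-s)
      - (((a:ℂ)) ^ ((1:ℂ) - s) - (((a : ℝ) + 1 : ℝ) : ℂ) ^ ((1:ℂ) - s)) / (s - 1) := by
    rw [hφ]
    push_cast
    have hsub : s - 1 ≠ 0 := sub_ne_zero.mpr hs1
    field_simp
    ring
  rw [heq] at this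
  calc _ ≤ ‖s‖ * a ^ (-s.re - 1) * ‖(a + 1 : ℝ) - a‖ := this
    _ = ‖s‖ * a ^ (-s.re - 1) := by norm_num

noncomputable def tfun (α : ℝ) (n : ℕ) (s : ℂ) : ℂ :=
  (((n:ℝ) + α : ℝ) : ℂ) ^ (-s) -
    ((((n:ℝ) + α : ℝ) : ℂ) ^ ((1:ℂ) - s) - (((n:ℝ) + α + 1 : ℝ) : ℂ) ^ ((1:ℂ) - s)) / (s - 1)

lemma norm_cpow_real {c : ℝ} (hc : 0 < c) (w : ℂ) : ‖((c : ℝ) : ℂ) ^ w‖ = c ^ w.re := by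
  rw [Complex.norm_cpow_eq_rpow_re_of_pos hc]

lemma summable_aux (α : ℝ) (hα : 0 < α) {p : ℝ} (hp : 1 < p) :
    Summable (fun n : ℕ => ((n:ℝ) + α) ^ (-p)) := by
  have h := (Real.summable_one_div_nat_add_rpow α p).mpr hp
  refine h.congr fun n => ?_
  rw [abs_of_pos (by positivity), one_div, ← Real.rpow_neg (by positivity)]

lemma summable_tfun (α : ℝ) (hα : 0 < α) {s : ℂ} (hs : 1 ≤ s.re) (hs1 : s ≠ 1) :
    Summable (fun n : ℕ => tfun α n s) := by
  refine Summable.of_norm_bounded (g := fun n => ‖s‖ * ((n:ℝ) + α) ^ (-(s.re + 1)))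
    (((summable_aux α hα (by linarith)).mul_left _)) fun n => ?_
  have := t_bound (a := (n:ℝ) + α) (by positivity) hs hs1
  rw [tfun, show -(s.re + 1) = -s.re - 1 by ring]
  exact this

lemma summable_T (α : ℝ) (hα : 0 < α) {s : ℂ} (hs : 1 < s.re) :
    Summable (fun n : ℕ => (((n:ℝ) + α : ℝ) : ℂ) ^ (-s)) := by
  refine Summable.of_norm_bounded (g := fun n => ((n:ℝ) + α) ^ (-s.re))
    (summable_aux α hα hs) fun n => ?_
  rw [norm_cpow_real (by positivity)]
  simp

lemma identity_step (α : ℝ) (hα : 0 < α) {s : ℂ} (hs : 1 < s.re) :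
    (∑' n : ℕ, ((n : ℂ) + (α : ℂ)) ^ (-s)) - 1 / (s - 1)
      = (∑' n : ℕ, tfun α n s) + (((α : ℂ)) ^ ((1:ℂ) - s) - 1) / (s - 1) := by
  have hs1 : s ≠ 1 := fun h => by rw [h] at hs; simp at hs
  have hcast : (fun n : ℕ => ((n : ℂ) + (α : ℂ)) ^ (-s))
      = fun n : ℕ => (((n:ℝ) + α : ℝ) : ℂ) ^ (-s) := by
    funext n; push_cast; ring_nf
  have hT := summable_T α hα hs
  have ht := summable_tfun α hα hs.le hs1
  have hu : Summable (fun n : ℕ => (((n:ℝ) + α : ℝ) : ℂ) ^ (-s) - tfun α n s) := hT.sub ht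
  -- compute tsum of u by telescoping
  have huval : ∑' n : ℕ, ((((n:ℝ) + α : ℝ) : ℂ) ^ (-s) - tfun α n s)
      = ((α : ℂ)) ^ ((1:ℂ) - s) / (s - 1) := by
    refine tendsto_nhds_unique hu.hasSum.tendsto_sum_nat ?_
    have hps : ∀ N : ℕ, ∑ k ∈ Finset.range N, ((((k:ℝ) + α : ℝ) : ℂ) ^ (-s) - tfun α k s)
        = ((α : ℂ) ^ ((1:ℂ) - s) - (((N:ℝ) + α : ℝ) : ℂ) ^ ((1:ℂ) - s)) / (s - 1) := by
      intro N
      have := Finset.sum_range_sub' (fun k : ℕ => (((k:ℝ) + α : ℝ) : ℂ) ^ ((1:ℂ) - s) / (s - 1)) N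
      rw [show (((0:ℕ):ℝ) + α : ℝ) = α by simp] at this
      rw [sub_div, ← this]
      refine Finset.sum_congr rfl fun k _ => ?_
      rw [tfun, show (((k+1:ℕ):ℝ) + α : ℝ) = ((k:ℝ) + α + 1 : ℝ) by push_cast; ring]
      have hsub : s - 1 ≠ 0 := sub_ne_zero.mpr hs1
      field_simp
      ring
    simp_rw [hps]
    have hzero : Tendsto (fun N : ℕ => (((N:ℝ) + α : ℝ) : ℂ) ^ ((1:ℂ) - s)) atTop (𝓝 0) := by
      rw [tendsto_zero_iff_norm_tendsto_zero]
      have : ∀ N : ℕ, ‖(((N:ℝ) + α : ℝ) : ℂ) ^ ((1:ℂ) - s)‖ = (((N:ℝ) + α)) ^ (-(s.re - 1)) := by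
        intro N
        rw [norm_cpow_real (by positivity)]
        norm_num
      simp_rw [this]
      refine (tendsto_rpow_neg_atTop (by linarith)).comp ?_
      exact tendsto_atTop_add_const_right _ _ tendsto_natCast_atTop_atTop
    have : Tendsto (fun N : ℕ => ((α : ℂ) ^ ((1:ℂ) - s) - (((N:ℝ) + α : ℝ) : ℂ) ^ ((1:ℂ) - s))
        / (s - 1)) atTop (𝓝 (((α : ℂ) ^ ((1:ℂ) - s) - 0) / (s - 1))) :=
      (tendsto_const_nhds.sub hzero).div_const _
    simpa using this
  rw [hcast]
  have hsum : ∑' n : ℕ, (((n:ℝ) + α : ℝ) : ℂ) ^ (-s)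
      = (∑' n : ℕ, tfun α n s) + (α : ℂ) ^ ((1:ℂ) - s) / (s - 1) := by
    rw [← huval, ← Summable.tsum_add ht hu]
    exact tsum_congr fun n => by ring
  rw [hsum, sub_div]
  ring

lemma tfun_tendsto (α : ℝ) (hα : 0 < α) (n : ℕ) :
    Tendsto (fun s : ℂ => tfun α n s) (𝓝[≠] (1:ℂ))
      (𝓝 (((((n:ℝ) + α)⁻¹ - (Real.log ((n:ℝ) + α + 1) - Real.log ((n:ℝ) + α)) : ℝ) : ℂ))) := by
  set c : ℝ := (n:ℝ) + α with hc
  have hc0 : 0 < c := by positivity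
  have hc1 : 0 < c + 1 := by positivity
  have hcont : Tendsto (fun s : ℂ => ((c : ℝ) : ℂ) ^ (-s)) (𝓝[≠] (1:ℂ))
      (𝓝 (((c : ℝ) : ℂ) ^ (-1 : ℂ))) := by
    have : ContinuousAt (fun s : ℂ => ((c : ℝ) : ℂ) ^ (-s)) 1 := by
      exact (continuousAt_const_cpow (Complex.ofReal_ne_zero.mpr hc0.ne')).comp
        (continuousAt_neg)
    exact this.tendsto.mono_left nhdsWithin_le_nhds
  have h1 := slope_cpow_tendsto c hc0
  have h2 := slope_cpow_tendsto (c + 1) hc1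
  have hcomb := hcont.sub (h1.sub h2)
  refine hcomb.congr' ?_ |>.mono_right (le_of_eq ?_)
  · filter_upwards [self_mem_nhdsWithin] with s hs
    have hsub : s - 1 ≠ 0 := sub_ne_zero.mpr hs
    rw [tfun, ← hc]
    push_cast
    field_simp
    ring
  · congr 1
    rw [Complex.cpow_neg_one]
    push_cast
    ring

lemma bound_summable (α : ℝ) (hα : 0 < α) :
    Summable (fun n : ℕ => 2 * max 1 α⁻¹ * ((n:ℝ) + α) ^ (-(2:ℝ))) :=
  (summable_aux α hα (by norm_num)).mul_left _

lemma eventual_bound (α : ℝ) (hα : 0 < α) :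
    ∀ᶠ s : ℂ in 𝓝[{s : ℂ | 1 < s.re}] 1, ∀ n : ℕ,
      ‖tfun α n s‖ ≤ 2 * max 1 α⁻¹ * ((n:ℝ) + α) ^ (-(2:ℝ)) := by
  have hball : ∀ᶠ s : ℂ in 𝓝[{s : ℂ | 1 < s.re}] 1, dist s 1 < 1 :=
    nhdsWithin_le_nhds (Metric.ball_mem_nhds _ one_pos)
  filter_upwards [hball, self_mem_nhdsWithin] with s hdist hre n
  have hre' : 1 < s.re := hre
  have hs1 : s ≠ 1 := fun h => by rw [h] at hre'; simp at hre'
  have hnorm : ‖s‖ ≤ 2 := by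
    calc ‖s‖ = ‖(s - 1) + 1‖ := by ring_nf
      _ ≤ ‖s - 1‖ + ‖(1:ℂ)‖ := norm_add_le _ _
      _ ≤ 2 := by
          rw [Complex.dist_eq] at hdist
          simp only [norm_one]
          have : ‖s - 1‖ < 1 := hdist
          linarith
  have hre2 : s.re ≤ 2 := by
    have h := Complex.abs_re_le_norm (s - 1)
    rw [Complex.dist_eq] at hdist
    have : |s.re - 1| < 1 := by
      simpa using lt_of_le_of_lt h hdist
    have := abs_lt.mp this
    linarith [this.2]
  set a : ℝ := (n:ℝ) + α with ha
  have ha0 : 0 < a := by positivity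
  have haα : α ≤ a := by simp [ha]
  calc ‖tfun α n s‖ ≤ ‖s‖ * a ^ (-s.re - 1) := by
        have := t_bound (a := a) ha0 hre'.le hs1
        rw [tfun]; exact this
    _ ≤ 2 * (max 1 α⁻¹ * a ^ (-(2:ℝ))) := by
        refine mul_le_mul hnorm ?_ (by positivity) (by norm_num)
        have hsplit : a ^ (-s.re - 1) = a ^ (-(2:ℝ)) * a ^ (1 - s.re) := by
          rw [← Real.rpow_add ha0]; ring_nf
        rw [hsplit, mul_comm]
        refine mul_le_mul_of_nonneg_right ?_ (by positivity)
        rcases le_or_gt 1 a with h | h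
        · exact le_max_of_le_left (Real.rpow_le_one_of_one_le_of_nonpos h (by linarith))
        · refine le_max_of_le_right ?_
          calc a ^ (1 - s.re) ≤ a ^ (-1 : ℝ) :=
                Real.rpow_le_rpow_of_exponent_ge ha0 h.le (by linarith)
            _ = a⁻¹ := Real.rpow_neg_one a
            _ ≤ α⁻¹ := by
                exact inv_anti₀ hα haα
    _ = 2 * max 1 α⁻¹ * a ^ (-(2:ℝ)) := by ring

lemma G_tsum (α : ℝ) (hα : 0 < α) :
    HasSum (fun n : ℕ => ((n:ℝ) + α)⁻¹ - (Real.log ((n:ℝ) + α + 1) - Real.log ((n:ℝ) + α)))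
      (Real.log α - deriv Real.Gamma α / Real.Gamma α) := by
  set G : ℕ → ℝ := fun n => ((n:ℝ) + α)⁻¹ - (Real.log ((n:ℝ) + α + 1) - Real.log ((n:ℝ) + α))
    with hG
  have hGsummable : Summable G := by
    refine Summable.of_nonneg_of_le (fun n => ?_) (fun n => ?_)
      (summable_aux α hα (show (1:ℝ) < 2 by norm_num))
    · -- 0 ≤ G n
      have h := Real.log_le_sub_one_of_pos
        (show (0:ℝ) < ((n:ℝ) + α + 1) / ((n:ℝ) + α) by positivity)
      rw [Real.log_div (by positivity) (by positivity)] at h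
      have : ((n:ℝ) + α + 1) / ((n:ℝ) + α) - 1 = ((n:ℝ) + α)⁻¹ := by field_simp; ring
      rw [this] at h
      simp only [hG]
      linarith
    · -- G n ≤ (n+α)^(-2)
      have h := Real.one_sub_inv_le_log_of_pos
        (show (0:ℝ) < ((n:ℝ) + α + 1) / ((n:ℝ) + α) by positivity)
      rw [Real.log_div (by positivity) (by positivity)] at h
      have hinv : 1 - (((n:ℝ) + α + 1) / ((n:ℝ) + α))⁻¹ = ((n:ℝ) + α + 1)⁻¹ := by
        rw [inv_div]; field_simp; ring
      rw [hinv] at h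
      have h2 : G n ≤ ((n:ℝ) + α)⁻¹ - ((n:ℝ) + α + 1)⁻¹ := by
        simp only [hG]; linarith
      refine h2.trans ?_
      rw [Real.rpow_neg (by positivity), show ((2:ℝ)) = ((2:ℕ):ℝ) by norm_num,
        Real.rpow_natCast]
      have hlhs : ((n:ℝ) + α)⁻¹ - ((n:ℝ) + α + 1)⁻¹
          = (((n:ℝ) + α) * ((n:ℝ) + α + 1))⁻¹ := by
        field_simp
        ring
      rw [hlhs]
      refine inv_anti₀ (by positivity) ?_
      have : ((n:ℝ) + α) ^ 2 = ((n:ℝ) + α) * ((n:ℝ) + α) := sq _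
      rw [this]
      have : (0:ℝ) < (n:ℝ) + α := by positivity
      nlinarith
  have hps : ∀ N : ℕ, ∑ k ∈ Finset.range N, G k
      = (∑ k ∈ Finset.range N, ((k:ℝ) + α)⁻¹) - (Real.log ((N:ℝ) + α) - Real.log α) := by
    intro N
    have ht := Finset.sum_range_sub (fun k : ℕ => Real.log ((k:ℝ) + α)) N
    rw [show (((0:ℕ):ℝ) + α) = α by simp] at ht
    rw [hG, Finset.sum_sub_distrib]
    congr 1
    rw [← ht]
    refine Finset.sum_congr rfl fun k _ => ?_
    rw [show (((k+1:ℕ):ℝ) + α) = ((k:ℝ) + α + 1) by push_cast; ring]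
  have hlim : Tendsto (fun N : ℕ => ∑ k ∈ Finset.range N, G k) atTop
      (𝓝 (Real.log α - deriv Real.Gamma α / Real.Gamma α)) := by
    simp_rw [hps]
    have := psi_limit α hα
    have h2 : Tendsto (fun N : ℕ =>
        Real.log α - (Real.log ((N:ℝ) + α) - ∑ k ∈ Finset.range N, ((k:ℝ) + α)⁻¹)) atTop
        (𝓝 (Real.log α - deriv Real.Gamma α / Real.Gamma α)) := tendsto_const_nhds.sub this
    refine h2.congr fun N => ?_
    ring
  have := hGsummable.hasSum
  rwa [tendsto_nhds_unique this.tendsto_sum_nat hlim] at this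

end AuxStmt18

/-- The Hurwitz zeta function `ζ(s,α) = Σ_{n≥0} (n+α)^{-s}` (for `α > 0`) satisfies
`lim_{s→1} (ζ(s,α) - 1/(s-1)) = -Γ'(α)/Γ(α)`, the limit being taken through the
half-plane `Re(s) > 1` where the series converges. -/
theorem stmt18 (α : ℝ) (hα : 0 < α) :
    Tendsto (fun s : ℂ => (∑' n : ℕ, ((n : ℂ) + (α : ℂ)) ^ (-s)) - 1 / (s - 1))
      (nhdsWithin 1 {s : ℂ | 1 < s.re})
      (nhds (-((deriv Real.Gamma α / Real.Gamma α : ℝ) : ℂ))) := by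
  open Set Topology in
  have hid : (fun s : ℂ => (∑' n : ℕ, ((n : ℂ) + (α : ℂ)) ^ (-s)) - 1 / (s - 1))
      =ᶠ[𝓝[{s : ℂ | 1 < s.re}] 1]
      (fun s => (∑' n : ℕ, tfun α n s) + (((α : ℂ)) ^ ((1:ℂ) - s) - 1) / (s - 1)) := by
    filter_upwards [self_mem_nhdsWithin] with s hs
    exact identity_step α hα hs
  rw [show (nhdsWithin (1:ℂ) {s : ℂ | 1 < s.re}) = 𝓝[{s : ℂ | 1 < s.re}] 1 from rfl,
    Filter.tendsto_congr' hid]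
  have hmono : 𝓝[{s : ℂ | 1 < s.re}] (1:ℂ) ≤ 𝓝[≠] 1 := by
    refine nhdsWithin_mono 1 fun s hs => ?_
    simp only [Set.mem_compl_iff, Set.mem_singleton_iff]
    intro h
    rw [h] at hs
    simp at hs
  have h1 : Tendsto (fun s : ℂ => ∑' n : ℕ, tfun α n s) (𝓝[{s : ℂ | 1 < s.re}] 1)
      (𝓝 (∑' n : ℕ,
        ((((n:ℝ)+α)⁻¹ - (Real.log ((n:ℝ)+α+1) - Real.log ((n:ℝ)+α)) : ℝ) : ℂ))) :=
    tendsto_tsum_of_dominated_convergence (bound_summable α hα)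
      (fun n => (tfun_tendsto α hα n).mono_left hmono) (eventual_bound α hα)
  have h2 : Tendsto (fun s : ℂ => (((α:ℂ)) ^ ((1:ℂ)-s) - 1)/(s-1)) (𝓝[{s:ℂ|1<s.re}] 1)
      (𝓝 (-(Real.log α : ℂ))) := (slope_cpow_tendsto α hα).mono_left hmono
  have h3 := h1.add h2
  convert h3 using 2
  rw [← Complex.ofReal_tsum, (G_tsum α hα).tsum_eq]
  push_cast
  ring
end
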